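/- arXiv:0706.2720 — 7 statements merged into one kernel-verified Lean document; each statement's English description precedes it below -/
import Mathlib

section
/- If Ψ: (0,∞) → (0,∞) is non-increasing and satisfies C₁·Ψ(ε) ≤ Ψ(ε/2) for all 0 < ε ≤ σ with some constant C₁ > 1, then for h = log C₁ / log 2 one has ∫_ε^σ Ψ(u)/u du ≤ C₁ h⁻¹ Ψ(ε) for all 0 < ε ≤ σ. -/
/-!
Cut `[ε, σ]` at the dyadic points `2ᵏε`. Since `Ψ` is non-increasing, the piece
`[2ᵏε, 2ᵏ⁺¹ε]` contributes at most `Ψ(2ᵏε) log 2 ≤ C₁⁻ᵏ Ψ(ε) log 2`, so the whole integral is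
at most `Ψ(ε) log 2 / (1 - C₁⁻¹) = C₁ Ψ(ε) log 2 / (C₁ - 1)`, and `log C₁ ≤ C₁ - 1`.
-/

open MeasureTheory Set

section

variable {Ψ : ℝ → ℝ}

lemma antitoneOn_div_self (hanti : AntitoneOn Ψ (Ioi 0)) (hnonneg : ∀ x, 0 < x → 0 ≤ Ψ x) :
    AntitoneOn (fun u => Ψ u / u) (Ioi 0) := by
  intro x hx y hy hxy
  calc Ψ y / y ≤ Ψ x / y :=
        div_le_div_of_nonneg_right (hanti hx hy hxy) (hx.out.trans_le hxy).le
    _ ≤ Ψ x / x := div_le_div_of_nonneg_left (hnonneg x hx) hx hxy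

lemma intervalIntegrable_div_self (hanti : AntitoneOn Ψ (Ioi 0))
    (hnonneg : ∀ x, 0 < x → 0 ≤ Ψ x) {a b : ℝ} (ha : 0 < a) (hb : 0 < b) :
    IntervalIntegrable (fun u => Ψ u / u) volume a b :=
  ((antitoneOn_div_self hanti hnonneg).mono fun _ hx =>
    (lt_min ha hb).trans_le hx.1).intervalIntegrable

lemma integral_div_self_le_mul_log (hanti : AntitoneOn Ψ (Ioi 0))
    (hnonneg : ∀ x, 0 < x → 0 ≤ Ψ x) {a b : ℝ} (ha : 0 < a) (hab : a ≤ b) :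
    ∫ u in a..b, Ψ u / u ≤ Ψ a * Real.log (b / a) := by
  have hb : 0 < b := ha.trans_le hab
  have hinv : IntervalIntegrable (fun u => u⁻¹) volume a b :=
    intervalIntegral.intervalIntegrable_inv
      (fun _ hx => ((lt_min ha hb).trans_le hx.1).ne') continuousOn_id
  calc ∫ u in a..b, Ψ u / u ≤ ∫ u in a..b, Ψ a * u⁻¹ := by
        refine intervalIntegral.integral_mono_on hab
          (intervalIntegrable_div_self hanti hnonneg ha hb) (hinv.const_mul _) fun u hu => ?_
        have hu0 : 0 < u := ha.trans_le hu.1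
        rw [← div_eq_mul_inv]
        exact div_le_div_of_nonneg_right (hanti ha hu0 hu.1) hu0.le
    _ = Ψ a * Real.log (b / a) := by
        rw [intervalIntegral.integral_const_mul, integral_inv_of_pos ha hb]

lemma integral_div_self_le_of_le_two_mul (hanti : AntitoneOn Ψ (Ioi 0))
    (hnonneg : ∀ x, 0 < x → 0 ≤ Ψ x) {a b : ℝ} (ha : 0 < a) (hab : a ≤ b) (hb : b ≤ 2 * a) :
    ∫ u in a..b, Ψ u / u ≤ Ψ a * Real.log 2 := by
  refine (integral_div_self_le_mul_log hanti hnonneg ha hab).trans ?_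
  have := hnonneg a ha
  gcongr
  · exact div_pos (ha.trans_le hab) ha
  · rw [div_le_iff₀ ha]; linarith

lemma integral_div_self_le_of_doubling {σ r : ℝ} (hr0 : 0 ≤ r) (hr : r < 1)
    (hanti : AntitoneOn Ψ (Ioi 0)) (hnonneg : ∀ x, 0 < x → 0 ≤ Ψ x)
    (hdecay : ∀ x, 0 < x → 2 * x ≤ σ → Ψ (2 * x) ≤ r * Ψ x)
    {ε : ℝ} (hε : 0 < ε) (hεσ : ε ≤ σ) :
    ∫ u in ε..σ, Ψ u / u ≤ Ψ ε * Real.log 2 / (1 - r) := by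
  have hr' : 0 < 1 - r := sub_pos.2 hr
  have hlog2 : 0 < Real.log 2 := Real.log_pos one_lt_two
  obtain ⟨n, hn⟩ := pow_unbounded_of_one_lt (σ / ε) one_lt_two
  have hσε : σ ≤ 2 ^ n * ε := by rw [div_lt_iff₀ hε] at hn; exact hn.le
  clear hn
  induction n generalizing ε with
  | zero =>
    rw [show σ = ε from le_antisymm (by simpa using hσε) hεσ, intervalIntegral.integral_same]
    exact div_nonneg (mul_nonneg (hnonneg ε hε) hlog2.le) hr'.le
  | succ n ih =>
    have hΨε := hnonneg ε hε
    rcases le_or_gt σ (2 * ε) with h2 | h2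
    · calc ∫ u in ε..σ, Ψ u / u ≤ Ψ ε * Real.log 2 :=
            integral_div_self_le_of_le_two_mul hanti hnonneg hε hεσ h2
        _ ≤ Ψ ε * Real.log 2 / (1 - r) := le_div_self (by positivity) hr' (by linarith)
    · have h2ε : 0 < 2 * ε := by positivity
      have htail : ∫ u in (2 * ε)..σ, Ψ u / u ≤ Ψ (2 * ε) * Real.log 2 / (1 - r) :=
        ih h2ε h2.le (by rw [pow_succ] at hσε; linarith)
      rw [← intervalIntegral.integral_add_adjacent_intervals
        (intervalIntegrable_div_self hanti hnonneg hε h2ε)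
        (intervalIntegrable_div_self hanti hnonneg h2ε (hε.trans_le hεσ))]
      calc (∫ u in ε..(2 * ε), Ψ u / u) + ∫ u in (2 * ε)..σ, Ψ u / u
          ≤ Ψ ε * Real.log 2 + r * Ψ ε * Real.log 2 / (1 - r) := by
            gcongr
            · exact integral_div_self_le_of_le_two_mul hanti hnonneg hε (by linarith) le_rfl
            · exact htail.trans (by gcongr; exact hdecay ε hε h2.le)
        _ = Ψ ε * Real.log 2 / (1 - r) := by field_simp; ring

end

theorem stmt0_general (Ψ : ℝ → ℝ) (σ C₁ : ℝ) (hC₁ : 1 < C₁)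
    (hpos : ∀ x, 0 < x → 0 < Ψ x)
    (hanti : ∀ x y, 0 < x → x ≤ y → Ψ y ≤ Ψ x)
    (hreg : ∀ ε, 0 < ε → ε ≤ σ → C₁ * Ψ ε ≤ Ψ (ε / 2)) :
    ∀ ε, 0 < ε → ε ≤ σ →
      (∫ u in ε..σ, Ψ u / u) ≤ C₁ * (Real.log C₁ / Real.log 2)⁻¹ * Ψ ε := by
  intro ε hε hεσ
  have hC₁0 : 0 < C₁ := one_pos.trans hC₁
  have hdecay : ∀ x, 0 < x → 2 * x ≤ σ → Ψ (2 * x) ≤ C₁⁻¹ * Ψ x := by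
    intro x hx h2x
    rw [inv_mul_eq_div, le_div_iff₀ hC₁0, mul_comm]
    simpa using hreg (2 * x) (by positivity) h2x
  have hΨε : 0 ≤ Ψ ε := (hpos ε hε).le
  have hlogC₁ : 0 < Real.log C₁ := Real.log_pos hC₁
  have hlog_le : Real.log C₁ ≤ C₁ - 1 := Real.log_le_sub_one_of_pos hC₁0
  calc ∫ u in ε..σ, Ψ u / u ≤ Ψ ε * Real.log 2 / (1 - C₁⁻¹) :=
        integral_div_self_le_of_doubling (by positivity) (inv_lt_one_of_one_lt₀ hC₁)
          (fun x hx y _ hxy => hanti x y hx hxy) (fun x hx => (hpos x hx).le) hdecay hε hεσ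
    _ = C₁ * (Real.log 2 / (C₁ - 1)) * Ψ ε := by field_simp
    _ ≤ C₁ * (Real.log C₁ / Real.log 2)⁻¹ * Ψ ε := by
        rw [inv_div]
        gcongr

/-- If `Ψ` is non-increasing, positive on `(0,∞)` and satisfies `C₁·Ψ(ε) ≤ Ψ(ε/2)`
for all `0 < ε ≤ σ` with `C₁ > 1`, then with `h = log C₁ / log 2` one has
`∫_ε^σ Ψ(u)/u du ≤ C₁ h⁻¹ Ψ(ε)` for all `0 < ε ≤ σ`. -/
theorem stmt0 (Ψ : ℝ → ℝ) (σ C₁ : ℝ) (hσ : 0 < σ) (hC₁ : 1 < C₁)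
    (hpos : ∀ x, 0 < x → 0 < Ψ x)
    (hanti : ∀ x y, 0 < x → x ≤ y → Ψ y ≤ Ψ x)
    (hcont : ContinuousOn Ψ (Set.Ioi 0))
    (hreg : ∀ ε, 0 < ε → ε ≤ σ → C₁ * Ψ ε ≤ Ψ (ε / 2)) :
    ∀ ε, 0 < ε → ε ≤ σ →
      (∫ u in ε..σ, Ψ u / u) ≤ C₁ * (Real.log C₁ / Real.log 2)⁻¹ * Ψ ε :=
  stmt0_general Ψ σ C₁ hC₁ hpos hanti hreg
end

section
/- Let ξ₁, ξ₂, … be i.i.d. standard Gaussian random variables. There is a universal constant c₁ > 0 such that for all real L > 0 and all integers N ≥ 1 with 2L ≤ N, one has −log E[exp(−L·max_{1≤i≤N} |ξᵢ|)] ≤ c₁·L·√(log(N/L)). -/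
open MeasureTheory ProbabilityTheory Real Finset
open scoped NNReal

/-!
Take the level `t = √(2 log (4N/L))`. The Chernoff bound for a standard Gaussian gives
`P(|ξᵢ| > t) ≤ 2 exp(-t²/2) = L/(2N)`, so by independence all of `ξ₁, …, ξ_N` lie in `[-t, t]`
with probability at least `(1 - L/(2N))^N ≥ e^{-L}`. On that event `exp(-L max |ξᵢ|) ≥ e^{-Lt}`,
so the expectation is at least `e^{-L(t+1)}`, and `t + 1 ≤ 5 √(log (N/L))` because `N/L ≥ 2`.
-/

lemma exp_neg_two_mul_le_one_sub {x : ℝ} (h0 : 0 ≤ x) (h2 : x ≤ 1 / 2) :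
    exp (-(2 * x)) ≤ 1 - x := by
  have hmul : exp (-(2 * x)) * exp (2 * x) = 1 := by rw [← exp_add]; norm_num
  nlinarith [add_one_le_exp (2 * x), exp_pos (-(2 * x)), sq_nonneg x]

lemma sqrt_two_mul_log_four_mul_add_one_le {r : ℝ} (hr : 2 ≤ r) :
    √(2 * log (4 * r)) + 1 ≤ 5 * √(log r) := by
  have hlog2 : log 2 ≤ log r := log_le_log (by norm_num) hr
  have hlog4 : log (4 * r) ≤ 3 * log r := by
    rw [log_mul (by norm_num) (by linarith), show (4 : ℝ) = 2 ^ 2 by norm_num, log_pow]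
    push_cast; linarith
  have hs := sq_sqrt (show 0 ≤ log r by linarith [Real.log_pos one_lt_two])
  have hs0 := sqrt_nonneg (log r)
  have h1 : √(2 * log (4 * r)) ≤ 3 * √(log r) := sqrt_le_iff.2 ⟨by positivity, by nlinarith⟩
  have h2 : 1 ≤ 2 * √(log r) := by nlinarith [log_two_gt_d9]
  linarith

namespace ProbabilityTheory

variable {Ω : Type*} [MeasurableSpace Ω] {P : Measure Ω}

lemma hasSubgaussianMGF_of_map_eq_gaussianReal {X : Ω → ℝ} {v : ℝ≥0}
    (hX : P.map X = gaussianReal 0 v) : HasSubgaussianMGF X v P := by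
  have hXm : AEMeasurable X P :=
    .of_map_ne_zero (by rw [hX]; exact IsProbabilityMeasure.ne_zero _)
  rw [← HasSubgaussianMGF.id_map_iff hXm, hX]
  exact ⟨integrable_exp_mul_gaussianReal, fun t => by simp [mgf_id_gaussianReal]⟩

lemma one_sub_two_mul_exp_le_measureReal_abs_le [IsProbabilityMeasure P] {X : Ω → ℝ}
    {v : ℝ≥0} (hX : P.map X = gaussianReal 0 v) {t : ℝ} (ht : 0 ≤ t) :
    1 - 2 * exp (-t ^ 2 / (2 * v)) ≤ P.real {ω | |X ω| ≤ t} := by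
  have hX' := hasSubgaussianMGF_of_map_eq_gaussianReal hX
  have hcover : Set.univ ⊆ {ω | |X ω| ≤ t} ∪ ({ω | t ≤ X ω} ∪ {ω | t ≤ (-X) ω}) := by
    intro ω _
    simp only [Set.mem_union, Set.mem_ofPred_eq, Pi.neg_apply]
    rcases le_total |X ω| t with h | h
    · exact .inl h
    · rcases abs_cases (X ω) with ⟨h', _⟩ | ⟨h', _⟩ <;> rw [h'] at h
      · exact .inr (.inl h)
      · exact .inr (.inr h)
  have hunion := (measureReal_mono (μ := P) hcover).trans <|
    (measureReal_union_le _ _).trans (add_le_add_right (measureReal_union_le _ _) _)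
  rw [probReal_univ] at hunion
  linarith [hX'.measure_ge_le ht, hX'.neg.measure_ge_le ht]

lemma exp_neg_le_measureReal_biInter {ι β : Type*} [MeasurableSpace β] {ξ : ι → Ω → β}
    (hind : iIndepFun ξ P) {S : Set β} (hS : MeasurableSet S) (s : Finset ι) {x : ℝ}
    (hx0 : 0 ≤ x) (hx : x ≤ 1 / 2) (hξ : ∀ i, 1 - x ≤ P.real (ξ i ⁻¹' S)) :
    exp (-(2 * x * #s)) ≤ P.real (⋂ i ∈ s, ξ i ⁻¹' S) := by
  rw [measureReal_def, hind.meas_biInter fun i _ => ⟨S, hS, rfl⟩, ENNReal.toReal_prod]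
  calc exp (-(2 * x * #s)) = ∏ _i ∈ s, exp (-(2 * x)) := by
        rw [prod_const, ← exp_nat_mul]; ring_nf
    _ ≤ ∏ _i ∈ s, (1 - x) :=
        prod_le_prod (fun _ _ => (exp_pos _).le) fun _ _ => exp_neg_two_mul_le_one_sub hx0 hx
    _ ≤ ∏ i ∈ s, P.real (ξ i ⁻¹' S) := prod_le_prod (fun _ _ => by linarith) fun i _ => hξ i

lemma exp_neg_mul_mul_measureReal_le_integral [IsFiniteMeasure P] {Y : Ω → ℝ}
    (hY : AEMeasurable Y P) (hY0 : ∀ ω, 0 ≤ Y ω) {L : ℝ} (hL : 0 ≤ L) (t : ℝ) :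
    exp (-(L * t)) * P.real {ω | Y ω ≤ t} ≤ ∫ ω, exp (-(L * Y ω)) ∂P := by
  have hint : Integrable (fun ω => exp (-(L * Y ω))) P := by
    refine .of_bound (by fun_prop) 1 (ae_of_all _ fun ω => ?_)
    rw [norm_of_nonneg (exp_pos _).le, exp_le_one_iff]
    nlinarith [hY0 ω]
  refine (mul_le_mul_of_nonneg_left (measureReal_mono fun ω hω => ?_) (exp_pos _).le).trans
    (mul_meas_ge_le_integral_of_nonneg (ae_of_all _ fun _ => (exp_pos _).le) hint _)
  exact exp_le_exp.2 (by nlinarith [hω.out])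

lemma exp_neg_le_integral_exp_neg_mul_iSup_abs [IsProbabilityMeasure P] {ξ : ℕ → Ω → ℝ}
    (hind : iIndepFun ξ P) {v : ℝ≥0} (hξ : ∀ i, P.map (ξ i) = gaussianReal 0 v) (N : ℕ)
    {L t : ℝ} (hL : 0 ≤ L) (ht : 0 ≤ t) (htail : 2 * exp (-t ^ 2 / (2 * v)) ≤ 1 / 2) :
    exp (-(L * t + 4 * exp (-t ^ 2 / (2 * v)) * N)) ≤
      ∫ ω, exp (-(L * ⨆ i : Fin N, |ξ i ω|)) ∂P := by
  have hbox := exp_neg_le_measureReal_biInter hind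
    (measurableSet_le measurable_abs measurable_const) (range N) (by positivity) htail
    fun i => one_sub_two_mul_exp_le_measureReal_abs_le (hξ i) ht
  have hmax : ⋂ i ∈ range N, ξ i ⁻¹' {y | |y| ≤ t} ⊆ {ω | ⨆ i : Fin N, |ξ i ω| ≤ t} :=
    fun ω hω => Real.iSup_le (fun i => Set.mem_iInter₂.1 hω i (mem_range.2 i.isLt)) ht
  have hmeas : AEMeasurable (fun ω => ⨆ i : Fin N, |ξ i ω|) P :=
    .iSup fun i => (hasSubgaussianMGF_of_map_eq_gaussianReal (hξ i)).aemeasurable.abs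
  calc exp (-(L * t + 4 * exp (-t ^ 2 / (2 * v)) * N))
      = exp (-(L * t)) * exp (-(2 * (2 * exp (-t ^ 2 / (2 * v))) * #(range N))) := by
        rw [card_range, ← exp_add]; ring_nf
    _ ≤ exp (-(L * t)) * P.real {ω | ⨆ i : Fin N, |ξ i ω| ≤ t} := by
        gcongr; exact hbox.trans (measureReal_mono hmax)
    _ ≤ ∫ ω, exp (-(L * ⨆ i : Fin N, |ξ i ω|)) ∂P :=
        exp_neg_mul_mul_measureReal_le_integral hmeas
          (fun ω => Real.iSup_nonneg fun _ => abs_nonneg _) hL t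

end ProbabilityTheory

/-- There is a universal constant `c₁ > 0` such that for i.i.d. standard Gaussians
`ξ₁, ξ₂, …`, all `L > 0` and all integers `N ≥ 1` with `2L ≤ N`:
`-log E[exp(-L·max_{1≤i≤N} |ξᵢ|)] ≤ c₁·L·√(log(N/L))`. -/
theorem stmt6 :
    ∃ c₁ : ℝ, 0 < c₁ ∧
      ∀ (Ω : Type) [MeasurableSpace Ω] (P : Measure Ω), IsProbabilityMeasure P →
      ∀ ξ : ℕ → Ω → ℝ,
        iIndepFun ξ P →
        (∀ i, Measure.map (ξ i) P = gaussianReal 0 1) →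
        ∀ (L : ℝ) (N : ℕ), 0 < L → 1 ≤ N → 2 * L ≤ (N : ℝ) →
          -Real.log (∫ ω, Real.exp (-(L * ⨆ i : Fin N, |ξ i ω|)) ∂P) ≤
            c₁ * L * Real.sqrt (Real.log (N / L)) := by
  refine ⟨5, by norm_num, fun Ω _ P _ ξ hind hξ L N hL _ hLN => ?_⟩
  have hN : (0 : ℝ) < N := by linarith
  have hr : 2 ≤ N / L := (le_div_iff₀ hL).2 (by linarith)
  set t := √(2 * log (4 * (N / L)))
  have hexp : exp (-t ^ 2 / (2 * ((1 : ℝ≥0) : ℝ))) = L / (4 * N) := by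
    rw [sq_sqrt (by nlinarith [log_nonneg (show 1 ≤ 4 * (N / L) by linarith)]), NNReal.coe_one,
      show -(2 * log (4 * (N / L))) / (2 * 1) = -log (4 * (N / L)) by ring, exp_neg,
      exp_log (by positivity)]
    field_simp
  have key := exp_neg_le_integral_exp_neg_mul_iSup_abs hind hξ N hL.le (sqrt_nonneg _)
    (by rw [hexp, mul_div_assoc', div_le_iff₀ (by positivity)]; linarith)
  rw [hexp, show 4 * (L / (4 * N)) * N = L by field_simp] at key
  have hlog := log_le_log (exp_pos _) key
  rw [log_exp] at hlog
  nlinarith [mul_le_mul_of_nonneg_left (sqrt_two_mul_log_four_mul_add_one_le hr) hL.le]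
end

section
/- Let ξ₁, ξ₂, … be i.i.d. standard Gaussian random variables. There is a universal constant c₂ > 0 such that for all L ≥ 1 and all integers N ≥ 1 with 2L ≤ N, one has −log E[exp(−L·max_{1≤i≤N} |ξᵢ|)] ≥ c₂·L·√(log(N/L)). -/
/-!
Split the expectation on the event `max |ξᵢ| < t`: off it the integrand is at most `e^{-Lt}`,
and by independence the event has probability `γ(-t, t)^N`, where `γ` is the standard Gaussian.
Write `N = L e^{u²}` with `u = √(log (N / L))`. If `Lu ≥ 2`, take `t = u / 2`: since
`γ(-t, t) ≤ 1 - 2φ(t + 1)` for the density `φ`, we get `γ(-t, t)^N ≤ exp(-2Nφ(u/2 + 1))`,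
and `Nφ(u/2 + 1)` is a constant times `L e^{7u²/8 - u/2}`, which beats `Lu`. If `Lu ≤ 2`,
already `t = 1/2` makes the bound at most `7/8 ≤ e^{-Lu/16}`. Hence `c₂ = 1/16`.
-/

open MeasureTheory ProbabilityTheory Real Set
open scoped NNReal ENNReal

section GaussianIntervals

variable {m : ℝ} {v : ℝ≥0} {s : Set ℝ} {c : ℝ}

lemma gaussianReal_real_le_of_pdf_le (hv : v ≠ 0) (hs : MeasurableSet s) (hsv : volume s ≠ ∞)
    (hc : ∀ x ∈ s, gaussianPDFReal m v x ≤ c) :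
    (gaussianReal m v).real s ≤ volume.real s * c := by
  rw [measureReal_def, gaussianReal_apply_eq_integral m hv,
    ENNReal.toReal_ofReal (setIntegral_nonneg hs fun x _ ↦ gaussianPDFReal_nonneg _ _ _),
    ← smul_eq_mul, ← setIntegral_const]
  exact setIntegral_mono_on (integrable_gaussianPDFReal m v).integrableOn
    (integrableOn_const hsv) hs hc

lemma le_gaussianReal_real_of_le_pdf (hv : v ≠ 0) (hs : MeasurableSet s) (hsv : volume s ≠ ∞)
    (hc : ∀ x ∈ s, c ≤ gaussianPDFReal m v x) :
    volume.real s * c ≤ (gaussianReal m v).real s := by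
  rw [measureReal_def (μ := gaussianReal m v), gaussianReal_apply_eq_integral m hv,
    ENNReal.toReal_ofReal (setIntegral_nonneg hs fun x _ ↦ gaussianPDFReal_nonneg _ _ _),
    ← smul_eq_mul, ← setIntegral_const]
  exact setIntegral_mono_on (integrableOn_const hsv)
    (integrable_gaussianPDFReal m v).integrableOn hs hc

end GaussianIntervals

lemma gaussianPDFReal_zero_one (x : ℝ) :
    gaussianPDFReal 0 1 x = (√(2 * π))⁻¹ * exp (-x ^ 2 / 2) := by
  simp [gaussianPDFReal]

lemma gaussianPDFReal_zero_one_le_of_abs_le {x y : ℝ} (h : |x| ≤ |y|) :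
    gaussianPDFReal 0 1 y ≤ gaussianPDFReal 0 1 x := by
  rw [gaussianPDFReal_zero_one, gaussianPDFReal_zero_one]
  gcongr _ * exp ?_
  nlinarith [sq_abs x, sq_abs y, abs_nonneg x]

lemma gaussianReal_real_Ioo_le {t : ℝ} (ht : 0 ≤ t) :
    (gaussianReal 0 1).real (Ioo (-t) t) ≤ 2 * t * gaussianPDFReal 0 1 0 :=
  calc (gaussianReal 0 1).real (Ioo (-t) t)
      ≤ volume.real (Ioo (-t) t) * gaussianPDFReal 0 1 0 :=
        gaussianReal_real_le_of_pdf_le one_ne_zero measurableSet_Ioo measure_Ioo_lt_top.ne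
          fun x _ ↦ gaussianPDFReal_zero_one_le_of_abs_le (by simp)
    _ = 2 * t * gaussianPDFReal 0 1 0 := by rw [Real.volume_real_Ioo_of_le (by linarith)]; ring

lemma gaussianReal_real_Ioo_le_one_sub {t : ℝ} (ht : 0 ≤ t) :
    (gaussianReal 0 1).real (Ioo (-t) t) ≤ 1 - 2 * gaussianPDFReal 0 1 (t + 1) := by
  have hpdf {x : ℝ} (hx : |x| ≤ t + 1) : gaussianPDFReal 0 1 (t + 1) ≤ gaussianPDFReal 0 1 x :=
    gaussianPDFReal_zero_one_le_of_abs_le (hx.trans (le_abs_self _))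
  have hleft := le_gaussianReal_real_of_le_pdf (s := Ioc (-(t + 1)) (-t)) one_ne_zero
    measurableSet_Ioc measure_Ioc_lt_top.ne
    fun x hx ↦ hpdf (abs_le.2 ⟨hx.1.le, by linarith [hx.2]⟩)
  have hright := le_gaussianReal_real_of_le_pdf (s := Ioo t (t + 1)) one_ne_zero
    measurableSet_Ioo measure_Ioo_lt_top.ne
    fun x hx ↦ hpdf (abs_le.2 ⟨by linarith [hx.1], hx.2.le⟩)
  rw [Real.volume_real_Ioc_of_le (by linarith)] at hleft
  rw [Real.volume_real_Ioo_of_le (by linarith)] at hright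
  have hdisj₁ : Disjoint (Ioo (-t) t) (Ioc (-(t + 1)) (-t)) :=
    disjoint_left.2 fun x h₁ h₂ ↦ by linarith [h₁.1, h₂.2]
  have hdisj₂ : Disjoint (Ioo (-t) t ∪ Ioc (-(t + 1)) (-t)) (Ioo t (t + 1)) :=
    disjoint_left.2 fun x h₁ h₂ ↦ by rcases h₁ with h₁ | h₁ <;> linarith [h₁.1, h₁.2, h₂.1]
  have htotal :
      (gaussianReal 0 1).real (Ioo (-t) t ∪ Ioc (-(t + 1)) (-t) ∪ Ioo t (t + 1)) ≤ 1 :=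
    measureReal_le_one
  rw [measureReal_union hdisj₂ measurableSet_Ioo, measureReal_union hdisj₁ measurableSet_Ioc]
    at htotal
  linarith

section Maximum

variable {Ω : Type*} [MeasurableSpace Ω] {P : Measure Ω} {M : Ω → ℝ} {L : ℝ}

lemma integrable_exp_neg_mul [IsFiniteMeasure P] (hM : AEMeasurable M P) (hM0 : ∀ ω, 0 ≤ M ω)
    (hL : 0 ≤ L) : Integrable (fun ω ↦ exp (-(L * M ω))) P :=
  .of_bound (hM.const_mul L).neg.exp.aestronglyMeasurable 1 <| ae_of_all _ fun ω ↦ by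
    rw [norm_of_nonneg (exp_pos _).le, exp_le_one_iff, neg_nonpos]
    exact mul_nonneg hL (hM0 ω)

lemma integral_exp_neg_mul_le [IsProbabilityMeasure P] (hM : AEMeasurable M P)
    (hM0 : ∀ ω, 0 ≤ M ω) (hL : 0 ≤ L) (t : ℝ) :
    ∫ ω, exp (-(L * M ω)) ∂P ≤ exp (-(L * t)) + P.real {ω | M ω < t} := by
  set E := {ω | M ω < t}
  have hE : NullMeasurableSet E P := hM.nullMeasurableSet_preimage measurableSet_Iio
  have hind : Integrable (E.indicator fun _ ↦ (1 : ℝ)) P := (integrable_const 1).indicator₀ hE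
  have hpt (ω : Ω) : exp (-(L * M ω)) ≤ exp (-(L * t)) + E.indicator (fun _ ↦ 1) ω := by
    by_cases hω : ω ∈ E
    · rw [indicator_of_mem hω]
      have : exp (-(L * M ω)) ≤ 1 := exp_le_one_iff.2 (neg_nonpos.2 (mul_nonneg hL (hM0 ω)))
      linarith [exp_pos (-(L * t))]
    · rw [indicator_of_notMem hω, add_zero]
      exact exp_le_exp.2 (neg_le_neg (mul_le_mul_of_nonneg_left (not_lt.1 hω) hL))
  calc ∫ ω, exp (-(L * M ω)) ∂P
      ≤ ∫ ω, (exp (-(L * t)) + E.indicator (fun _ ↦ 1) ω) ∂P :=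
        integral_mono (integrable_exp_neg_mul hM hM0 hL) ((integrable_const _).add hind) hpt
    _ = exp (-(L * t)) + P.real E := by
      rw [integral_add (integrable_const _) hind, integral_const, probReal_univ, one_smul,
        integral_indicator₀ hE, setIntegral_const, smul_eq_mul, mul_one]

variable {ξ : ℕ → Ω → ℝ} {μ : Measure ℝ}

lemma aemeasurable_iSup_abs (hξ : ∀ i, HasLaw (ξ i) μ P) (N : ℕ) :
    AEMeasurable (fun ω ↦ ⨆ i : Fin N, |ξ i ω|) P :=
  AEMeasurable.iSup fun i ↦ continuous_abs.measurable.comp_aemeasurable (hξ i).aemeasurable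

lemma measureReal_iSup_abs_lt_le [IsFiniteMeasure P] (hind : iIndepFun ξ P)
    (hξ : ∀ i, HasLaw (ξ i) μ P) (N : ℕ) (t : ℝ) :
    P.real {ω | ⨆ i : Fin N, |ξ i ω| < t} ≤ μ.real (Ioo (-t) t) ^ N := by
  have hsub : {ω | ⨆ i : Fin N, |ξ i ω| < t} ⊆ ⋂ i ∈ Finset.range N, ξ i ⁻¹' Ioo (-t) t := by
    intro ω hω
    simp only [mem_iInter, Finset.mem_range]
    intro i hi
    exact abs_lt.1 <|
      (le_ciSup (Finite.bddAbove_range fun j : Fin N ↦ |ξ j ω|) ⟨i, hi⟩).trans_lt hω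
  calc P.real {ω | ⨆ i : Fin N, |ξ i ω| < t}
      ≤ P.real (⋂ i ∈ Finset.range N, ξ i ⁻¹' Ioo (-t) t) := measureReal_mono hsub
    _ = ∏ i ∈ Finset.range N, P.real (ξ i ⁻¹' Ioo (-t) t) := by
      simp only [measureReal_def,
        hind.measure_inter_preimage_eq_mul _ fun _ _ ↦ measurableSet_Ioo, ENNReal.toReal_prod]
    _ = μ.real (Ioo (-t) t) ^ N := by
      have hlaw (i : ℕ) : P.real (ξ i ⁻¹' Ioo (-t) t) = μ.real (Ioo (-t) t) := by
        rw [← (hξ i).map_eq, map_measureReal_apply_of_aemeasurable (hξ i).aemeasurable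
          measurableSet_Ioo]
      simp only [hlaw, Finset.prod_const, Finset.card_range]

end Maximum

noncomputable def maxAbsLaplaceBound (L : ℝ) (N : ℕ) (t : ℝ) : ℝ :=
  exp (-(L * t)) + (gaussianReal 0 1).real (Ioo (-t) t) ^ N

lemma five_div_two_le_sqrt_two_pi : 5 / 2 ≤ √(2 * π) :=
  le_sqrt_of_sq_le (by nlinarith [pi_gt_d2])

lemma sqrt_two_pi_le_eight_div_three : √(2 * π) ≤ 8 / 3 :=
  sqrt_le_iff.2 ⟨by norm_num, by nlinarith [pi_lt_d2]⟩

lemma maxAbsLaplaceBound_le_of_le_two {L u : ℝ} {N : ℕ} (hL : 1 ≤ L) (hN : 2 ≤ N)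
    (hu : L * u ≤ 2) : maxAbsLaplaceBound L N (1 / 2) ≤ exp (-(1 / 16 * L * u)) := by
  have hw : (gaussianReal 0 1).real (Ioo (-(1 / 2)) (1 / 2)) ≤ 2 / 5 :=
    calc _ ≤ 2 * (1 / 2) * gaussianPDFReal 0 1 0 := gaussianReal_real_Ioo_le (by norm_num)
      _ = (√(2 * π))⁻¹ := by simp [gaussianPDFReal_zero_one]
      _ ≤ 2 / 5 := by
        rw [inv_le_comm₀ (by positivity) (by norm_num)]; linarith [five_div_two_le_sqrt_two_pi]
  have hwN : (gaussianReal 0 1).real (Ioo (-(1 / 2)) (1 / 2)) ^ N ≤ 4 / 25 :=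
    calc _ ≤ (gaussianReal 0 1).real (Ioo (-(1 / 2)) (1 / 2)) ^ 2 :=
          pow_le_pow_of_le_one measureReal_nonneg measureReal_le_one hN
      _ ≤ (2 / 5) ^ 2 := pow_le_pow_left₀ measureReal_nonneg hw 2
      _ = 4 / 25 := by norm_num
  have hexp : exp (-(L * (1 / 2))) ≤ 2 / 3 := by
    rw [exp_neg, inv_le_comm₀ (exp_pos _) (by norm_num)]
    linarith [add_one_le_exp (L * (1 / 2))]
  have hrhs : 7 / 8 ≤ exp (-(1 / 16 * L * u)) := by
    linarith [add_one_le_exp (-(1 / 16 * L * u))]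
  unfold maxAbsLaplaceBound
  linarith

lemma nine_div_twenty_mul_le_exp_sq_mul_gaussianPDFReal {u : ℝ} (hu : 0 ≤ u) :
    9 / 20 * u ≤ 2 * exp (u ^ 2) * gaussianPDFReal 0 1 (u / 2 + 1) := by
  have hpdf : 3 / 8 ≤ (√(2 * π))⁻¹ := by
    rw [le_inv_comm₀ (by norm_num) (by positivity)]; linarith [sqrt_two_pi_le_eight_div_three]
  have hhalf : 3 / 5 ≤ exp (-(1 / 2)) := by
    rw [exp_neg, le_inv_comm₀ (by norm_num) (exp_pos _)]
    nlinarith [exp_one_lt_d9, exp_pos (1 / 2), show exp (1 / 2) * exp (1 / 2) = exp 1 by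
      rw [← exp_add]; norm_num]
  have hpoly : u ≤ exp (7 * u ^ 2 / 8 - u / 2) := by
    nlinarith [add_one_le_exp (7 * u ^ 2 / 8 - u / 2), sq_nonneg (u - 6 / 7)]
  have hsplit : 2 * exp (u ^ 2) * gaussianPDFReal 0 1 (u / 2 + 1)
      = 2 * (√(2 * π))⁻¹ * (exp (-(1 / 2)) * exp (7 * u ^ 2 / 8 - u / 2)) := by
    rw [gaussianPDFReal_zero_one, ← exp_add,
      show -(1 / 2) + (7 * u ^ 2 / 8 - u / 2) = u ^ 2 + -(u / 2 + 1) ^ 2 / 2 by ring, exp_add]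
    ring
  calc 9 / 20 * u = 2 * (3 / 8) * (3 / 5 * u) := by ring
    _ ≤ _ := by rw [hsplit]; gcongr

lemma maxAbsLaplaceBound_le_of_two_le {L u : ℝ} {N : ℕ} (hL : 0 ≤ L) (hu : 0 ≤ u)
    (hN : (N : ℝ) = L * exp (u ^ 2)) (hLu : 2 ≤ L * u) :
    maxAbsLaplaceBound L N (u / 2) ≤ exp (-(1 / 16 * L * u)) := by
  set φ := gaussianPDFReal 0 1 (u / 2 + 1)
  have hw : (gaussianReal 0 1).real (Ioo (-(u / 2)) (u / 2)) ≤ exp (-(2 * φ)) :=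
    (gaussianReal_real_Ioo_le_one_sub (by positivity)).trans
      (by linarith [add_one_le_exp (-(2 * φ))])
  have hwN :
      (gaussianReal 0 1).real (Ioo (-(u / 2)) (u / 2)) ^ N ≤ exp (-(9 / 20 * (L * u))) :=
    calc _ ≤ exp (-(2 * φ)) ^ N := pow_le_pow_left₀ measureReal_nonneg hw N
      _ = exp (-(N * (2 * φ))) := by rw [← exp_nat_mul]; ring_nf
      _ ≤ exp (-(9 / 20 * (L * u))) := by
        have := mul_le_mul_of_nonneg_left
          (nine_div_twenty_mul_le_exp_sq_mul_gaussianPDFReal hu) hL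
        rw [hN]
        exact exp_le_exp.2 (by linarith)
  have hfirst : exp (-(L * (u / 2))) ≤ exp (-(9 / 20 * (L * u))) :=
    exp_le_exp.2 (by linarith)
  have htwo : 2 * exp (-(9 / 20 * (L * u))) ≤ exp (-(1 / 16 * L * u)) := by
    rw [← exp_log two_pos, ← exp_add]
    gcongr
    linarith [log_two_lt_d9]
  unfold maxAbsLaplaceBound
  linarith

lemma exists_maxAbsLaplaceBound_le {L : ℝ} {N : ℕ} (hL : 1 ≤ L) (hLN : 2 * L ≤ N) :
    ∃ t, maxAbsLaplaceBound L N t ≤ exp (-(1 / 16 * L * √(log (N / L)))) := by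
  have hL0 : 0 < L := by linarith
  have hN2 : 2 ≤ N := by exact_mod_cast (by linarith : (2 : ℝ) ≤ N)
  have hlog : 0 ≤ log (N / L) := log_nonneg ((le_div_iff₀ hL0).2 (by linarith))
  have hN : (N : ℝ) = L * exp (√(log (N / L)) ^ 2) := by
    rw [sq_sqrt hlog, exp_log (div_pos (by linarith) hL0)]
    field_simp
  rcases le_total (L * √(log (N / L))) 2 with hsmall | hlarge
  · exact ⟨1 / 2, maxAbsLaplaceBound_le_of_le_two hL hN2 hsmall⟩
  · exact ⟨_, maxAbsLaplaceBound_le_of_two_le hL0.le (sqrt_nonneg _) hN hlarge⟩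

/-- There is a universal constant `c₂ > 0` such that for i.i.d. standard Gaussians
`ξ₁, ξ₂, …`, all `L ≥ 1` and all integers `N ≥ 1` with `2L ≤ N`:
`-log E[exp(-L·max_{1≤i≤N} |ξᵢ|)] ≥ c₂·L·√(log(N/L))`. -/
theorem stmt7 :
    ∃ c₂ : ℝ, 0 < c₂ ∧
      ∀ (Ω : Type) [MeasurableSpace Ω] (P : Measure Ω), IsProbabilityMeasure P →
      ∀ ξ : ℕ → Ω → ℝ,
        iIndepFun ξ P →
        (∀ i, Measure.map (ξ i) P = gaussianReal 0 1) →
        ∀ (L : ℝ) (N : ℕ), 1 ≤ L → 1 ≤ N → 2 * L ≤ (N : ℝ) →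
          c₂ * L * Real.sqrt (Real.log (N / L)) ≤
            -Real.log (∫ ω, Real.exp (-(L * ⨆ i : Fin N, |ξ i ω|)) ∂P) := by
  refine ⟨1 / 16, by norm_num, fun Ω _ P _ ξ hind hmap L N hL _ hLN ↦ ?_⟩
  have hξ (i : ℕ) : HasLaw (ξ i) (gaussianReal 0 1) P :=
    ⟨.of_map_ne_zero (by rw [hmap i]; exact IsProbabilityMeasure.ne_zero _), hmap i⟩
  have hM := aemeasurable_iSup_abs hξ N
  have hM0 (ω : Ω) : 0 ≤ ⨆ i : Fin N, |ξ i ω| := Real.iSup_nonneg fun _ ↦ abs_nonneg _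
  have hL0 : 0 ≤ L := by linarith
  obtain ⟨t, ht⟩ := exists_maxAbsLaplaceBound_le hL hLN
  have hI :
      ∫ ω, exp (-(L * ⨆ i : Fin N, |ξ i ω|)) ∂P ≤ exp (-(1 / 16 * L * √(log (N / L)))) :=
    calc _ ≤ exp (-(L * t)) + P.real {ω | ⨆ i : Fin N, |ξ i ω| < t} :=
          integral_exp_neg_mul_le hM hM0 hL0 t
      _ ≤ maxAbsLaplaceBound L N t := by
          unfold maxAbsLaplaceBound
          linarith [measureReal_iSup_abs_lt_le hind hξ N t]
      _ ≤ _ := ht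
  have hlog := log_le_log (integral_exp_pos (integrable_exp_neg_mul hM hM0 hL0)) hI
  rw [log_exp] at hlog
  linarith
end

section
/- Let ξ₁, ξ₂, … be i.i.d. standard Gaussian random variables. There exist constants c₃, c₄ > 0 such that for all integers N ≥ 1 and all L ≥ 2N, c₃·N·log(L/N) ≤ −log E[exp(−L·max_{1≤i≤N} |ξᵢ|)] ≤ c₄·N·log(L/N). -/
/-!
Put `a = L / N ≥ 2`. Since `∑ |ξᵢ| ≤ N · max |ξᵢ|`, the integrand `exp (-L · max |ξᵢ|)` lies below
`∏ exp (-a |ξᵢ|)`, and on the event `max |ξᵢ| ≤ 1 / a` it is at least `e⁻ᴺ`. Independence turns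
both bounds into `N`-th powers of one-dimensional Gaussian quantities: `E exp (-a |ξ|) ≤ 1 / a`
because the standard Gaussian density is at most `1 / 2`, and `P (|ξ| ≤ 1 / a) ≥ 1 / (3a)` because
it is at least `1 / 6` on `[-1, 1]`. Hence `(3ea)⁻ᴺ ≤ E exp (-L · max |ξᵢ|) ≤ a⁻ᴺ`, and `log (3e) ≤ 4 log a`.
-/

open MeasureTheory ProbabilityTheory Real Set

lemma gaussianPDFReal_zero_one_le_half (x : ℝ) : gaussianPDFReal 0 1 x ≤ 1 / 2 := by
  have hsqrt : 2 ≤ √(2 * π) :=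
    (le_sqrt zero_le_two (by positivity)).mpr (by nlinarith [pi_gt_three])
  have hexp : rexp (-x ^ 2 / 2) ≤ 1 := exp_le_one_iff.mpr (by nlinarith [sq_nonneg x])
  simp only [gaussianPDFReal, NNReal.coe_one, mul_one, sub_zero]
  calc (√(2 * π))⁻¹ * rexp (-x ^ 2 / 2) ≤ 2⁻¹ * 1 := by gcongr
    _ = 1 / 2 := by norm_num

lemma integrable_comp_abs_of_integrableOn_Ioi {f : ℝ → ℝ} (hf : IntegrableOn f (Ioi 0)) :
    Integrable fun x => f |x| := by
  have hIoi : IntegrableOn (fun x => f |x|) (Ioi 0) :=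
    hf.congr_fun (fun x hx => by rw [abs_of_pos hx]) measurableSet_Ioi
  have hIic : IntegrableOn (fun x => f |x|) (Iic 0) := by
    have hneg : MeasurableEmbedding fun x : ℝ => -x := (Homeomorph.neg ℝ).measurableEmbedding
    rw [← Measure.map_neg_eq_self (volume : Measure ℝ), hneg.integrableOn_map_iff]
    simp only [Function.comp_def, abs_neg, neg_preimage, neg_Iic, neg_zero]
    exact (integrableOn_Ici_iff_integrableOn_Ioi).2 hIoi
  rw [← integrableOn_univ, ← Iic_union_Ioi (a := (0 : ℝ))]
  exact hIic.union hIoi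

lemma integrable_exp_neg_mul_abs {c : ℝ} (hc : 0 < c) :
    Integrable fun x : ℝ => rexp (-(c * |x|)) :=
  integrable_comp_abs_of_integrableOn_Ioi (f := fun x => rexp (-(c * x)))
    (by simpa only [neg_mul] using exp_neg_integrableOn_Ioi 0 hc)

lemma integral_exp_neg_mul_abs {c : ℝ} (hc : 0 < c) :
    ∫ x : ℝ, rexp (-(c * |x|)) = 2 * c⁻¹ := by
  rw [integral_comp_abs (f := fun y => rexp (-(c * y)))]
  have h := integral_comp_mul_left_Ioi (fun y => rexp (-y)) 0 hc
  simp only [mul_zero] at h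
  rw [h, integral_exp_neg_Ioi_zero, smul_eq_mul, mul_one]

lemma integral_exp_neg_mul_abs_gaussianReal_le {c : ℝ} (hc : 0 < c) :
    ∫ x, rexp (-(c * |x|)) ∂gaussianReal 0 1 ≤ c⁻¹ := by
  rw [integral_gaussianReal_eq_integral_smul one_ne_zero]
  calc ∫ x, gaussianPDFReal 0 1 x • rexp (-(c * |x|))
      ≤ ∫ x, 1 / 2 * rexp (-(c * |x|)) := by
        refine integral_mono_of_nonneg (ae_of_all _ fun x => ?_)
          ((integrable_exp_neg_mul_abs hc).const_mul _) (ae_of_all _ fun x => ?_)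
        · exact mul_nonneg (gaussianPDFReal_nonneg 0 1 x) (exp_pos _).le
        · exact mul_le_mul_of_nonneg_right (gaussianPDFReal_zero_one_le_half x) (exp_pos _).le
    _ = c⁻¹ := by rw [integral_const_mul, integral_exp_neg_mul_abs hc]; ring

lemma one_sixth_le_gaussianPDFReal_zero_one {x : ℝ} (hx : |x| ≤ 1) :
    1 / 6 ≤ gaussianPDFReal 0 1 x := by
  have hsqrt : √(2 * π) ≤ 3 := sqrt_le_iff.mpr ⟨by norm_num, by nlinarith [pi_lt_d2]⟩
  have hx2 : x ^ 2 ≤ 1 := by nlinarith [abs_nonneg x, sq_abs x]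
  have hexp : 1 / 2 ≤ rexp (-x ^ 2 / 2) := by linarith [add_one_le_exp (-x ^ 2 / 2)]
  simp only [gaussianPDFReal, NNReal.coe_one, mul_one, sub_zero]
  calc (1 : ℝ) / 6 = 3⁻¹ * (1 / 2) := by norm_num
    _ ≤ (√(2 * π))⁻¹ * rexp (-x ^ 2 / 2) := by gcongr

lemma div_three_le_gaussianReal_Icc {t : ℝ} (ht0 : 0 ≤ t) (ht1 : t ≤ 1) :
    t / 3 ≤ (gaussianReal 0 1).real (Icc (-t) t) := by
  rw [measureReal_def, gaussianReal_apply_eq_integral 0 one_ne_zero,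
    ENNReal.toReal_ofReal (setIntegral_nonneg measurableSet_Icc
      fun x _ => gaussianPDFReal_nonneg 0 1 x)]
  have h := setIntegral_ge_of_const_le_real (c := 1 / 6) (μ := volume) measurableSet_Icc
    (by simp) (fun x hx => one_sixth_le_gaussianPDFReal_zero_one
      ((abs_le.mpr hx).trans ht1)) (integrable_gaussianPDFReal 0 1).integrableOn
  rw [Real.volume_real_Icc_of_le (by linarith)] at h
  linarith

lemma map_eq_pi_of_iIndepFun {Ω ι κ β : Type*} [MeasurableSpace Ω] [MeasurableSpace β]
    [Fintype κ] {P : Measure Ω} {μ : Measure β} [NeZero μ] {ξ : ι → Ω → β}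
    (hξ : iIndepFun ξ P) (hlaw : ∀ i, P.map (ξ i) = μ) {g : κ → ι} (hg : g.Injective) :
    P.map (fun ω k => ξ (g k) ω) = Measure.pi fun _ => μ := by
  have hmeas : ∀ i, AEMeasurable (ξ i) P := fun i =>
    .of_map_ne_zero (by rw [hlaw]; exact NeZero.ne μ)
  rw [(hξ.precomp hg).map_fun_eq_pi_map fun k => hmeas (g k)]
  simp only [hlaw]

lemma integral_comp_eq_integral_pi {Ω ι κ β : Type*} [MeasurableSpace Ω] [MeasurableSpace β]
    [Fintype κ] {P : Measure Ω} {μ : Measure β} [IsProbabilityMeasure μ] {ξ : ι → Ω → β}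
    (hξ : iIndepFun ξ P) (hlaw : ∀ i, P.map (ξ i) = μ) {g : κ → ι} (hg : g.Injective)
    {F : (κ → β) → ℝ} (hF : Measurable F) :
    ∫ ω, F (fun k => ξ (g k) ω) ∂P = ∫ x, F x ∂Measure.pi fun _ => μ := by
  have hmap := map_eq_pi_of_iIndepFun hξ hlaw hg
  have hmeas : AEMeasurable (fun ω k => ξ (g k) ω) P :=
    .of_map_ne_zero (by rw [hmap]; exact NeZero.ne _)
  rw [← hmap, integral_map hmeas hF.aestronglyMeasurable]

section ProductMeasure

variable {ι : Type*} [Fintype ι] {μ : Measure ℝ} [IsProbabilityMeasure μ]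

lemma measurable_exp_neg_mul_iSup_abs (c : ℝ) :
    Measurable fun x : ι → ℝ => rexp (-(c * ⨆ i, |x i|)) :=
  measurable_exp.comp (measurable_const.mul
    (Measurable.iSup fun i => (measurable_pi_apply i).abs)).neg

lemma integral_exp_neg_mul_iSup_abs_le_pow {c : ℝ} (hc : 0 ≤ c) :
    ∫ x : ι → ℝ, rexp (-(c * Fintype.card ι * ⨆ i, |x i|)) ∂Measure.pi (fun _ => μ) ≤
      (∫ y, rexp (-(c * |y|)) ∂μ) ^ Fintype.card ι := by
  have hle : ∀ x : ι → ℝ,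
      rexp (-(c * Fintype.card ι * ⨆ i, |x i|)) ≤ ∏ i, rexp (-(c * |x i|)) := by
    intro x
    have hsum : ∑ i, |x i| ≤ Fintype.card ι * ⨆ i, |x i| := by
      simpa using Finset.sum_le_card_nsmul Finset.univ (fun i => |x i|) _
        fun i _ => le_ciSup (f := fun i => |x i|) (Finite.bddAbove_range _) i
    rw [← exp_sum, exp_le_exp, Finset.sum_neg_distrib, ← Finset.mul_sum, mul_assoc]
    exact neg_le_neg (mul_le_mul_of_nonneg_left hsum hc)
  have hint : Integrable (fun y : ℝ => rexp (-(c * |y|))) μ :=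
    Integrable.of_bound (by fun_prop) 1 (ae_of_all _ fun y => by
      rw [norm_of_nonneg (exp_pos _).le, exp_le_one_iff]
      exact neg_nonpos.mpr (by positivity))
  rw [← integral_fintype_prod_eq_pow]
  exact integral_mono_of_nonneg (ae_of_all _ fun x => (exp_pos _).le)
    (Integrable.fintype_prod fun _ => hint) (ae_of_all _ hle)

lemma pow_le_integral_exp_neg_mul_iSup_abs {c t : ℝ} (hc : 0 ≤ c) (ht : 0 ≤ t) :
    (rexp (-(c * t)) * μ.real (Icc (-t) t)) ^ Fintype.card ι ≤
      ∫ x : ι → ℝ, rexp (-(c * Fintype.card ι * ⨆ i, |x i|)) ∂Measure.pi (fun _ => μ) := by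
  set box : Set (ι → ℝ) := univ.pi fun _ => Icc (-t) t
  have hbox : MeasurableSet box := .univ_pi fun _ => measurableSet_Icc
  have hle : ∀ x ∈ box, rexp (-(c * Fintype.card ι * t)) ≤
      rexp (-(c * Fintype.card ι * ⨆ i, |x i|)) := by
    intro x hx
    have hM : ⨆ i, |x i| ≤ t := Real.iSup_le (fun i => abs_le.mpr (hx i (mem_univ i))) ht
    gcongr
  have hint : Integrable (fun x : ι → ℝ => rexp (-(c * Fintype.card ι * ⨆ i, |x i|)))
      (Measure.pi fun _ => μ) :=
    Integrable.of_bound (measurable_exp_neg_mul_iSup_abs _).aestronglyMeasurable 1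
      (ae_of_all _ fun x => by
        rw [norm_of_nonneg (exp_pos _).le, exp_le_one_iff, neg_nonpos]
        exact mul_nonneg (by positivity) (Real.iSup_nonneg fun i => abs_nonneg _))
  calc (rexp (-(c * t)) * μ.real (Icc (-t) t)) ^ Fintype.card ι
      = rexp (-(c * Fintype.card ι * t)) * (Measure.pi fun _ => μ).real box := by
        simp only [box, measureReal_def]
        rw [Measure.pi_pi, ENNReal.toReal_prod, Finset.prod_const,
          Finset.card_univ, mul_pow, ← exp_nat_mul]
        ring_nf
    _ ≤ ∫ x in box, rexp (-(c * Fintype.card ι * ⨆ i, |x i|)) ∂Measure.pi (fun _ => μ) :=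
        setIntegral_ge_of_const_le_real hbox (measure_ne_top _ _) hle hint.integrableOn
    _ ≤ _ := setIntegral_le_integral hint (ae_of_all _ fun x => (exp_pos _).le)

end ProductMeasure

lemma integral_exp_neg_mul_iSup_abs_gaussianReal_bounds {ι : Type*} [Fintype ι] {a : ℝ}
    (ha : 1 ≤ a) :
    (rexp (-1) * (a⁻¹ / 3)) ^ Fintype.card ι ≤
        ∫ x : ι → ℝ, rexp (-(a * Fintype.card ι * ⨆ i, |x i|))
          ∂Measure.pi (fun _ => gaussianReal 0 1) ∧
      ∫ x : ι → ℝ, rexp (-(a * Fintype.card ι * ⨆ i, |x i|))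
          ∂Measure.pi (fun _ => gaussianReal 0 1) ≤ a⁻¹ ^ Fintype.card ι := by
  have ha0 : 0 < a := one_pos.trans_le ha
  have hinv : a⁻¹ ≤ 1 := inv_le_one_of_one_le₀ ha
  constructor
  · refine le_trans ?_ (pow_le_integral_exp_neg_mul_iSup_abs ha0.le (inv_nonneg.mpr ha0.le))
    rw [mul_inv_cancel₀ ha0.ne']
    gcongr
    exact div_three_le_gaussianReal_Icc (inv_nonneg.mpr ha0.le) hinv
  · exact (integral_exp_neg_mul_iSup_abs_le_pow ha0.le).trans <| pow_le_pow_left₀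
      (integral_nonneg fun _ => (exp_pos _).le) (integral_exp_neg_mul_abs_gaussianReal_le ha0) _

lemma neg_log_bounds_of_pow_bounds {E a : ℝ} {n : ℕ} (ha : 2 ≤ a)
    (hlo : (rexp (-1) * (a⁻¹ / 3)) ^ n ≤ E) (hhi : E ≤ a⁻¹ ^ n) :
    n * log a ≤ -log E ∧ -log E ≤ 5 * n * log a := by
  have ha0 : 0 < a := two_pos.trans_le ha
  have hE : 0 < E := lt_of_lt_of_le (by positivity) hlo
  constructor
  · have h := log_le_log hE hhi
    rw [log_pow, log_inv] at h
    linarith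
  · have h := log_le_log (by positivity) hlo
    rw [log_pow, log_mul (exp_pos _).ne' (by positivity), log_exp,
      log_div (inv_pos.mpr ha0).ne' three_ne_zero, log_inv] at h
    -- `3e ≤ 16 ≤ a ^ 4`
    have h3e : 1 + log 3 ≤ 4 * log a := by
      have h16 : (2 : ℝ) ^ 4 ≤ a ^ 4 := pow_le_pow_left₀ zero_le_two ha 4
      have h := log_le_log (by positivity) ((by linarith [exp_one_lt_d9] :
        3 * rexp 1 ≤ 2 ^ 4).trans h16)
      rw [log_mul three_ne_zero (exp_pos _).ne', log_exp, log_pow] at h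
      push_cast at h
      linarith
    nlinarith [mul_le_mul_of_nonneg_left h3e (Nat.cast_nonneg (α := ℝ) n)]

/-- There exist constants `c₃, c₄ > 0` such that for i.i.d. standard Gaussians,
all integers `N ≥ 1` and all `L ≥ 2N`:
`c₃·N·log(L/N) ≤ -log E[exp(-L·max_{1≤i≤N} |ξᵢ|)] ≤ c₄·N·log(L/N)`. -/
theorem stmt8 :
    ∃ c₃ c₄ : ℝ, 0 < c₃ ∧ 0 < c₄ ∧
      ∀ (Ω : Type) [MeasurableSpace Ω] (P : Measure Ω), IsProbabilityMeasure P →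
      ∀ ξ : ℕ → Ω → ℝ,
        iIndepFun ξ P →
        (∀ i, Measure.map (ξ i) P = gaussianReal 0 1) →
        ∀ (L : ℝ) (N : ℕ), 1 ≤ N → 2 * (N : ℝ) ≤ L →
          c₃ * N * Real.log (L / N) ≤
            -Real.log (∫ ω, Real.exp (-(L * ⨆ i : Fin N, |ξ i ω|)) ∂P) ∧
          -Real.log (∫ ω, Real.exp (-(L * ⨆ i : Fin N, |ξ i ω|)) ∂P) ≤
            c₄ * N * Real.log (L / N) := by
  refine ⟨1, 5, one_pos, by norm_num, fun Ω _ P _ ξ hξ hlaw L N hN hNL => ?_⟩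
  have hN0 : (0 : ℝ) < N := by exact_mod_cast hN
  have ha : 2 ≤ L / N := (le_div_iff₀ hN0).mpr hNL
  have hL : L = L / N * Fintype.card (Fin N) := by
    rw [Fintype.card_fin, div_mul_cancel₀ _ hN0.ne']
  have hE : ∫ ω, rexp (-(L * ⨆ i : Fin N, |ξ i ω|)) ∂P =
      ∫ x : Fin N → ℝ, rexp (-(L / N * Fintype.card (Fin N) * ⨆ i, |x i|))
        ∂Measure.pi (fun _ => gaussianReal 0 1) := by
    rw [← hL]
    exact integral_comp_eq_integral_pi hξ hlaw Fin.val_injective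
      (measurable_exp_neg_mul_iSup_abs L)
  obtain ⟨hlo, hhi⟩ := integral_exp_neg_mul_iSup_abs_gaussianReal_bounds (ι := Fin N)
    (one_le_two.trans ha)
  rw [← hE, Fintype.card_fin] at hlo hhi
  rw [one_mul]
  exact neg_log_bounds_of_pow_bounds ha hlo hhi
end

section
/- For every α > 0, as L → ∞ one has log ∫_0^∞ exp(−y − L·y^{−α}) dy ∼ −C_α·L^{1/(1+α)}, where C_α = (1+α)·α^{−α/(1+α)} and f ∼ g means the ratio tends to 1. -/
/-!
Write `φ(y) = y + L y^(-α)`. Weighted AM-GM gives `φ ≥ m(L) := C_α L^(1/(1+α))` on `(0, ∞)`,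
with equality at `y₀ = (αL)^(1/(1+α))`. Hence the integrand is at least `e^(-m-1)` on
`[y₀, y₀ + 1]`, and, splitting `φ = (1 - 1/m) φ + φ/m ≥ (1 - 1/m) m + y/m`, the integral is at
most `m e^(1-m)`. So the logarithm of the integral is `-m + O(log m)`.
-/

open MeasureTheory Filter Real Set Topology

noncomputable def minPotential (α L : ℝ) : ℝ :=
  (1 + α) * α ^ (-α / (1 + α)) * L ^ (1 / (1 + α))

section Potential

variable {α L : ℝ}

theorem minPotential_le (hα : 0 < α) (hL : 0 ≤ L) {y : ℝ} (hy : 0 < y) :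
    minPotential α L ≤ y + L * y ^ (-α) := by
  have h1 : 0 < 1 + α := by linarith
  set w₁ := α / (1 + α) with hw₁
  set w₂ := 1 / (1 + α) with hw₂
  have hw : w₁ + w₂ = 1 := by rw [hw₁, hw₂]; field_simp; ring
  have hyα : 0 ≤ y ^ (-α) := rpow_nonneg hy.le _
  -- AM-GM for `y = w₁ · (y / w₁)` and `L y^(-α) = w₂ · (L y^(-α) / w₂)`
  have amgm := geom_mean_le_arith_mean2_weighted (by positivity : 0 ≤ w₁)
    (by positivity : 0 ≤ w₂) (by positivity : 0 ≤ (1 + α) / α * y)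
    (by positivity : 0 ≤ (1 + α) * (L * y ^ (-α))) hw
  have hmean : w₁ * ((1 + α) / α * y) + w₂ * ((1 + α) * (L * y ^ (-α))) = y + L * y ^ (-α) := by
    rw [hw₁, hw₂]; field_simp
  have hexp : w₁ + -α * w₂ = 0 := by rw [hw₁, hw₂]; ring
  have hgeom : ((1 + α) / α * y) ^ w₁ * ((1 + α) * (L * y ^ (-α))) ^ w₂ = minPotential α L := by
    rw [mul_rpow (by positivity) hy.le, div_rpow h1.le hα.le, mul_rpow h1.le (by positivity),
      mul_rpow hL hyα, ← rpow_mul hy.le]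
    calc (1 + α) ^ w₁ / α ^ w₁ * y ^ w₁ * ((1 + α) ^ w₂ * (L ^ w₂ * y ^ (-α * w₂)))
        = (1 + α) ^ (w₁ + w₂) * (α ^ w₁)⁻¹ * L ^ w₂ * y ^ (w₁ + -α * w₂) := by
          rw [rpow_add h1, rpow_add hy]; ring
      _ = minPotential α L := by
          rw [hw, hexp, rpow_one, rpow_zero, mul_one, ← rpow_neg hα.le, minPotential, hw₂,
            neg_div]
  rwa [hgeom, hmean] at amgm

theorem critical_add_mul_rpow_neg (hα : 0 < α) (hL : 0 < L) :
    (α * L) ^ (1 / (1 + α)) + L * ((α * L) ^ (1 / (1 + α))) ^ (-α) = minPotential α L := by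
  have h1 : 0 < 1 + α := by linarith
  have hsplit : ∀ x : ℝ, 0 < x → x * x ^ (-α / (1 + α)) = x ^ (1 / (1 + α)) := fun x hx => by
    rw [show 1 / (1 + α) = 1 + -α / (1 + α) by field_simp; ring, rpow_add hx, rpow_one]
  rw [← rpow_mul (by positivity), mul_rpow hα.le hL.le, mul_rpow hα.le hL.le,
    show 1 / (1 + α) * -α = -α / (1 + α) by ring, minPotential, ← hsplit α hα, ← hsplit L hL]
  ring

theorem tendsto_minPotential_atTop (hα : 0 < α) : Tendsto (minPotential α) atTop atTop :=
  (tendsto_rpow_atTop (by positivity)).const_mul_atTop (by positivity)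

end Potential

section Integral

variable {α L : ℝ}

theorem integrableOn_exp_neg_potential (hL : 0 ≤ L) :
    IntegrableOn (fun y => exp (-y - L * y ^ (-α))) (Ioi 0) := by
  refine (exp_neg_integrableOn_Ioi 0 one_pos).mono' (by fun_prop) ?_
  filter_upwards [ae_restrict_mem measurableSet_Ioi] with y hy
  rw [norm_eq_abs, abs_exp, exp_le_exp]
  nlinarith [mul_nonneg hL (rpow_nonneg (le_of_lt hy) (-α))]

theorem exp_neg_minPotential_sub_one_le_integral (hα : 0 < α) (hL : 0 < L) :
    exp (-(minPotential α L + 1)) ≤ ∫ y in Ioi 0, exp (-y - L * y ^ (-α)) := by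
  set y₀ := (α * L) ^ (1 / (1 + α))
  have hy₀ : 0 < y₀ := rpow_pos_of_pos (by positivity) _
  have hsub : Ioc y₀ (y₀ + 1) ⊆ Ioi 0 := fun x hx => hy₀.trans hx.1
  have hint := integrableOn_exp_neg_potential (α := α) hL.le
  have hbound : ∀ x ∈ Ioc y₀ (y₀ + 1), exp (-(minPotential α L + 1)) ≤ exp (-x - L * x ^ (-α)) := by
    intro x hx
    have hxα : L * x ^ (-α) ≤ L * y₀ ^ (-α) :=
      mul_le_mul_of_nonneg_left (rpow_le_rpow_of_nonpos hy₀ hx.1.le (by linarith)) hL.le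
    rw [exp_le_exp, ← critical_add_mul_rpow_neg hα hL]
    linarith [hx.2]
  calc exp (-(minPotential α L + 1))
      = exp (-(minPotential α L + 1)) * (volume (Ioc y₀ (y₀ + 1))).toReal := by simp
    _ ≤ ∫ y in Ioc y₀ (y₀ + 1), exp (-y - L * y ^ (-α)) :=
        setIntegral_ge_of_const_le_real measurableSet_Ioc measure_Ioc_lt_top.ne hbound
          (hint.mono_set hsub)
    _ ≤ ∫ y in Ioi 0, exp (-y - L * y ^ (-α)) :=
        setIntegral_mono_set hint (.of_forall fun _ => (exp_pos _).le) hsub.eventuallyLE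

theorem integral_le_exp_neg_minPotential (hα : 0 < α) (hL : 0 ≤ L) {b : ℝ} (hb : 0 < b)
    (hb1 : b ≤ 1) :
    ∫ y in Ioi 0, exp (-y - L * y ^ (-α)) ≤ exp (-((1 - b) * minPotential α L)) / b := by
  have hdecay := integrableOn_exp_mul_Ioi (neg_lt_zero.2 hb) 0
  calc ∫ y in Ioi 0, exp (-y - L * y ^ (-α))
      ≤ ∫ y in Ioi 0, exp (-((1 - b) * minPotential α L)) * exp (-b * y) := by
        refine setIntegral_mono_on (integrableOn_exp_neg_potential hL) (hdecay.const_mul _)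
          measurableSet_Ioi fun y hy => ?_
        have hmin := minPotential_le hα hL hy
        have hpot : 0 ≤ L * y ^ (-α) := mul_nonneg hL (rpow_nonneg (le_of_lt hy) _)
        rw [← exp_add, exp_le_exp]
        nlinarith
    _ = exp (-((1 - b) * minPotential α L)) / b := by
        rw [integral_const_mul, integral_exp_mul_Ioi (neg_lt_zero.2 hb)]
        simp [div_eq_mul_inv]

theorem abs_log_integral_add_minPotential_le (hα : 0 < α) (hL : 0 < L)
    (hm : 1 ≤ minPotential α L) :
    |log (∫ y in Ioi 0, exp (-y - L * y ^ (-α))) + minPotential α L|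
      ≤ 1 + log (minPotential α L) := by
  set m := minPotential α L
  set I := ∫ y in Ioi 0, exp (-y - L * y ^ (-α))
  have hm0 : 0 < m := one_pos.trans_le hm
  have hlow := exp_neg_minPotential_sub_one_le_integral hα hL
  have hI : 0 < I := (exp_pos _).trans_le hlow
  have hup := integral_le_exp_neg_minPotential hα hL.le (inv_pos.2 hm0) (inv_le_one_of_one_le₀ hm)
  have hlog_low : -(m + 1) ≤ log I := (le_log_iff_exp_le hI).2 hlow
  have hlog_up : log I ≤ -m + 1 + log m := by
    have := log_le_log hI hup
    rw [div_inv_eq_mul, log_mul (exp_pos _).ne' hm0.ne', log_exp, sub_mul, one_mul,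
      inv_mul_cancel₀ hm0.ne'] at this
    linarith
  rw [abs_le]
  constructor <;> linarith [log_nonneg hm]

end Integral

theorem tendsto_div_neg_nhds_one {ι : Type*} {l : Filter ι} {f m : ι → ℝ}
    (hm : Tendsto m l atTop) (h : ∀ᶠ x in l, |f x + m x| ≤ 1 + log (m x)) :
    Tendsto (fun x => f x / -m x) l (𝓝 1) := by
  have hratio : Tendsto (fun t => (1 + log t) / t) atTop (𝓝 0) :=
    ((Asymptotics.isLittleO_const_id_atTop 1).add isLittleO_log_id_atTop).tendsto_div_nhds_zero
  rw [tendsto_iff_norm_sub_tendsto_zero]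
  refine squeeze_zero' (.of_forall fun _ => norm_nonneg _) ?_ (hratio.comp hm)
  filter_upwards [h, hm.eventually_gt_atTop 0] with x hx hpos
  rw [Function.comp_apply, norm_eq_abs,
    show f x / -m x - 1 = -((f x + m x) / m x) by field_simp; ring, abs_neg, abs_div,
    abs_of_pos hpos]
  gcongr

/-- For every `α > 0`, as `L → ∞`:
`log ∫_0^∞ exp(-y - L·y^(-α)) dy ∼ -C_α·L^(1/(1+α))` with
`C_α = (1+α)·α^(-α/(1+α))`. -/
theorem stmt11 (α : ℝ) (hα : 0 < α) :
    Tendsto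
      (fun L : ℝ =>
        Real.log (∫ y in Set.Ioi (0 : ℝ), Real.exp (-y - L * y ^ (-α))) /
          (-((1 + α) * α ^ (-α / (1 + α)) * L ^ (1 / (1 + α)))))
      atTop (nhds 1) := by
  refine tendsto_div_neg_nhds_one (tendsto_minPotential_atTop hα) ?_
  filter_upwards [(tendsto_minPotential_atTop hα).eventually_ge_atTop 1, eventually_gt_atTop 0]
    with L hm hL
  exact abs_log_integral_add_minPotential_le hα hL hm
end

section
/- For every α > 0 there exist constants 0 < k₁ ≤ k₂ < ∞ such that as δ → 0⁺: if α > 1, then k₁·δ^{1/α} ≤ −log ∫_0^∞ exp(−y − δ·y^{−α}) dy ≤ k₂·δ^{1/α}; if α = 1, then k₁·δ·log(1/δ) ≤ −log ∫_0^∞ exp(−y − δ/y) dy ≤ k₂·δ·log(1/δ); if 0 < α < 1, then k₁·δ ≤ −log ∫_0^∞ exp(−y − δ·y^{−α}) dy ≤ k₂·δ. -/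
/-!
Write `I(δ) = ∫₀^∞ e^{-y-δy^{-α}} dy = 1 - D(δ)` with
`D(δ) = ∫₀^∞ e^{-y} (1 - e^{-δy^{-α}}) dy`. Once `D(δ) ≤ 1/2`, `-log I(δ)` lies between `D(δ)` and
`2 D(δ)`, and since `min(t, 1)/2 ≤ 1 - e^{-t} ≤ min(t, 1)`, `D(δ)` is comparable to
`∫₀^∞ e^{-y} min(δy^{-α}, 1) dy`. The integrand saturates for `y ≤ δ^{1/α}`: for `α > 1` this
region dominates and gives `δ^{1/α}`; for `α < 1` the whole integral is at most
`δ ∫₀^∞ e^{-y} y^{-α} dy = Γ(1-α) δ`; for `α = 1` the range `δ < y < 1` contributes `δ log(1/δ)`.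
-/

open MeasureTheory Filter Real Set Topology

lemma one_sub_le_neg_log {x : ℝ} (hx : 0 < x) : 1 - x ≤ -log x := by
  linarith [log_le_sub_one_of_pos hx]

lemma neg_log_le_two_mul_one_sub {x : ℝ} (hx : 1 / 2 ≤ x) (hx1 : x ≤ 1) :
    -log x ≤ 2 * (1 - x) := by
  have hx0 : 0 < x := by linarith
  have hlog := log_le_sub_one_of_pos (inv_pos.mpr hx0)
  rw [log_inv] at hlog
  have hinv : x⁻¹ - 1 ≤ 2 * (1 - x) := by
    rw [inv_eq_one_div, div_sub_one hx0.ne', div_le_iff₀ hx0]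
    nlinarith
  linarith

lemma one_sub_exp_neg_le_min (t : ℝ) : 1 - exp (-t) ≤ min t 1 :=
  le_min (by linarith [one_sub_le_exp_neg t]) (by linarith [exp_pos (-t)])

lemma min_div_two_le_one_sub_exp_neg {t : ℝ} (ht : 0 ≤ t) : min t 1 / 2 ≤ 1 - exp (-t) := by
  set s := min t 1
  have hs0 : 0 ≤ s := le_min ht zero_le_one
  have hs1 : s ≤ 1 := min_le_right t 1
  -- on `[0, 1]`, `e^{-s} ≤ 1 / (1 + s) ≤ 1 - s / 2`
  have hexp : exp (-s) * (1 + s) ≤ 1 := by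
    have := add_one_le_exp s
    calc exp (-s) * (1 + s) ≤ exp (-s) * exp s := by gcongr; linarith
      _ = 1 := by rw [← exp_add, neg_add_cancel, exp_zero]
  have hmono : exp (-t) ≤ exp (-s) := exp_le_exp.mpr (by linarith [min_le_left t 1])
  nlinarith [exp_pos (-s)]

noncomputable def defectDensity (φ : ℝ → ℝ) (δ y : ℝ) : ℝ :=
  exp (-y) * (1 - exp (-(δ * φ y)))

/-- `defect φ δ = 1 - ∫₀^∞ e^{-y-δφ(y)} dy`, see `integral_exp_neg_sub_mul`. -/
noncomputable def defect (φ : ℝ → ℝ) (δ : ℝ) : ℝ :=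
  ∫ y in Ioi 0, defectDensity φ δ y

section Defect

variable {φ : ℝ → ℝ} {δ : ℝ}

lemma defectDensity_eq (φ : ℝ → ℝ) (δ y : ℝ) :
    defectDensity φ δ y = exp (-y) - exp (-y - δ * φ y) := by
  rw [defectDensity, sub_eq_add_neg (-y), exp_add]; ring

lemma defectDensity_nonneg (hφ0 : ∀ y ∈ Ioi (0 : ℝ), 0 ≤ φ y) (hδ : 0 ≤ δ) {y : ℝ}
    (hy : y ∈ Ioi 0) : 0 ≤ defectDensity φ δ y :=
  mul_nonneg (exp_nonneg _) (sub_nonneg.mpr (exp_le_one_iff.mpr (by nlinarith [hφ0 y hy])))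

lemma defectDensity_le (φ : ℝ → ℝ) (δ y : ℝ) : defectDensity φ δ y ≤ exp (-y) * min (δ * φ y) 1 :=
  mul_le_mul_of_nonneg_left (one_sub_exp_neg_le_min _) (exp_nonneg _)

lemma integrableOn_exp_neg_sub_mul (hφ : Measurable φ) (hφ0 : ∀ y ∈ Ioi (0 : ℝ), 0 ≤ φ y)
    (hδ : 0 ≤ δ) : IntegrableOn (fun y ↦ exp (-y - δ * φ y)) (Ioi 0) := by
  refine (integrableOn_exp_neg_Ioi 0).mono' (by fun_prop) ?_
  filter_upwards [ae_restrict_mem measurableSet_Ioi] with y hy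
  rw [norm_of_nonneg (exp_nonneg _)]
  exact exp_le_exp.mpr (by nlinarith [hφ0 y hy])

lemma integrableOn_defectDensity (hφ : Measurable φ) (hφ0 : ∀ y ∈ Ioi (0 : ℝ), 0 ≤ φ y)
    (hδ : 0 ≤ δ) : IntegrableOn (defectDensity φ δ) (Ioi 0) := by
  simp only [funext (defectDensity_eq φ δ)]
  exact (integrableOn_exp_neg_Ioi 0).sub (integrableOn_exp_neg_sub_mul hφ hφ0 hδ)

lemma integral_exp_neg_sub_mul (hφ : Measurable φ) (hφ0 : ∀ y ∈ Ioi (0 : ℝ), 0 ≤ φ y)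
    (hδ : 0 ≤ δ) : ∫ y in Ioi 0, exp (-y - δ * φ y) = 1 - defect φ δ := by
  simp only [defect, defectDensity_eq]
  rw [integral_sub (integrableOn_exp_neg_Ioi 0) (integrableOn_exp_neg_sub_mul hφ hφ0 hδ),
    integral_exp_neg_Ioi_zero]
  ring

lemma defect_nonneg (hφ0 : ∀ y ∈ Ioi (0 : ℝ), 0 ≤ φ y) (hδ : 0 ≤ δ) : 0 ≤ defect φ δ :=
  setIntegral_nonneg measurableSet_Ioi fun _ hy ↦ defectDensity_nonneg hφ0 hδ hy

lemma defect_le_neg_log_integral (hφ : Measurable φ) (hφ0 : ∀ y ∈ Ioi (0 : ℝ), 0 ≤ φ y)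
    (hδ : 0 ≤ δ) (hD : defect φ δ ≤ 1 / 2) :
    defect φ δ ≤ -log (∫ y in Ioi 0, exp (-y - δ * φ y)) ∧
      -log (∫ y in Ioi 0, exp (-y - δ * φ y)) ≤ 2 * defect φ δ := by
  have hD0 := defect_nonneg hφ0 hδ
  rw [integral_exp_neg_sub_mul hφ hφ0 hδ]
  constructor
  · simpa using one_sub_le_neg_log (x := 1 - defect φ δ) (by linarith)
  · simpa using neg_log_le_two_mul_one_sub (x := 1 - defect φ δ) (by linarith) (by linarith)

lemma setIntegral_le_defect (hφ : Measurable φ) (hφ0 : ∀ y ∈ Ioi (0 : ℝ), 0 ≤ φ y)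
    (hδ : 0 ≤ δ) {S : Set ℝ} (hS : S ⊆ Ioc 0 1) (hSm : MeasurableSet S) {h : ℝ → ℝ}
    (hh : IntegrableOn h S) (hle : ∀ y ∈ S, h y ≤ exp (-1) / 2 * min (δ * φ y) 1) :
    ∫ y in S, h y ≤ defect φ δ := by
  have hSpos : S ⊆ Ioi 0 := hS.trans Ioc_subset_Ioi_self
  have hint := integrableOn_defectDensity hφ hφ0 hδ
  calc ∫ y in S, h y ≤ ∫ y in S, defectDensity φ δ y := by
        refine setIntegral_mono_on hh (hint.mono_set hSpos) hSm fun y hy ↦ ?_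
        have ht : 0 ≤ δ * φ y := mul_nonneg hδ (hφ0 y (hSpos hy))
        calc h y ≤ exp (-1) * (min (δ * φ y) 1 / 2) := by linarith [hle y hy]
          _ ≤ _ := mul_le_mul (exp_le_exp.mpr (by linarith [(hS hy).2]))
            (min_div_two_le_one_sub_exp_neg ht) (by positivity) (exp_nonneg _)
    _ ≤ defect φ δ := setIntegral_mono_set hint
        (ae_restrict_of_forall_mem measurableSet_Ioi fun _ hy ↦ defectDensity_nonneg hφ0 hδ hy)
        hSpos.eventuallyLE

lemma setIntegral_defectDensity_le (hφ : Measurable φ) (hφ0 : ∀ y ∈ Ioi (0 : ℝ), 0 ≤ φ y)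
    (hδ : 0 ≤ δ) {S : Set ℝ} (hS : S ⊆ Ioi 0) (hSm : MeasurableSet S) {h : ℝ → ℝ}
    (hh : IntegrableOn h S) (hle : ∀ y ∈ S, exp (-y) * min (δ * φ y) 1 ≤ h y) :
    ∫ y in S, defectDensity φ δ y ≤ ∫ y in S, h y :=
  setIntegral_mono_on ((integrableOn_defectDensity hφ hφ0 hδ).mono_set hS) hh hSm
    fun y hy ↦ (defectDensity_le φ δ y).trans (hle y hy)

lemma setIntegral_Ioc_zero_defectDensity_le (hφ : Measurable φ)
    (hφ0 : ∀ y ∈ Ioi (0 : ℝ), 0 ≤ φ y) (hδ : 0 ≤ δ) {a : ℝ} (ha : 0 ≤ a) :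
    ∫ y in Ioc 0 a, defectDensity φ δ y ≤ a := by
  have h := setIntegral_defectDensity_le hφ hφ0 hδ (S := Ioc 0 a) Ioc_subset_Ioi_self
    measurableSet_Ioc (integrableOn_const (C := (1 : ℝ)) measure_Ioc_lt_top.ne) fun y hy ↦
      mul_le_one₀ (exp_le_one_iff.mpr (neg_nonpos.mpr hy.1.le))
        (le_min (mul_nonneg hδ (hφ0 y hy.1)) zero_le_one) (min_le_right _ _)
  simpa [ha] using h

lemma setIntegral_defectDensity_le_mul (hφ : Measurable φ) (hφ0 : ∀ y ∈ Ioi (0 : ℝ), 0 ≤ φ y)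
    (hδ : 0 ≤ δ) {S : Set ℝ} (hS : S ⊆ Ioi 0) (hSm : MeasurableSet S) (hφS : IntegrableOn φ S) :
    ∫ y in S, defectDensity φ δ y ≤ δ * ∫ y in S, φ y := by
  rw [← integral_const_mul]
  exact setIntegral_defectDensity_le hφ hφ0 hδ hS hSm (hφS.const_mul δ) fun y hy ↦
    (mul_le_of_le_one_left (le_min (mul_nonneg hδ (hφ0 y (hS hy))) zero_le_one)
      (exp_le_one_iff.mpr (neg_nonpos.mpr (le_of_lt (hS hy))))).trans (min_le_left _ _)

theorem exists_neg_log_integral_bounds (hφ : Measurable φ)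
    (hφ0 : ∀ y ∈ Ioi (0 : ℝ), 0 ≤ φ y) {r : ℝ → ℝ} (hr : Tendsto r (𝓝[>] 0) (𝓝 0))
    {c C : ℝ} (hc : 0 < c)
    (hbounds : ∀ᶠ δ in 𝓝[>] 0, 0 < r δ ∧ c * r δ ≤ defect φ δ ∧ defect φ δ ≤ C * r δ) :
    ∃ k₁ k₂ : ℝ, 0 < k₁ ∧ k₁ ≤ k₂ ∧ ∀ᶠ δ in 𝓝[>] 0,
      k₁ * r δ ≤ -log (∫ y in Ioi 0, exp (-y - δ * φ y)) ∧
        -log (∫ y in Ioi 0, exp (-y - δ * φ y)) ≤ k₂ * r δ := by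
  obtain ⟨δ₀, hr₀, hlow₀, hup₀⟩ := hbounds.exists
  have hcC : c ≤ C := le_of_mul_le_mul_right (hlow₀.trans hup₀) hr₀
  have hC : 0 < C := hc.trans_le hcC
  have hsmall : ∀ᶠ δ in 𝓝[>] 0, r δ < 1 / (2 * C) :=
    hr.eventually (gt_mem_nhds (by positivity))
  refine ⟨c, 2 * C, hc, by linarith, ?_⟩
  filter_upwards [hbounds, hsmall, self_mem_nhdsWithin] with δ ⟨_, hlow, hup⟩ hrδ hδ
  have hD : defect φ δ ≤ 1 / 2 := by
    calc defect φ δ ≤ C * r δ := hup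
      _ ≤ C * (1 / (2 * C)) := by gcongr
      _ = 1 / 2 := by field_simp
  obtain ⟨h₁, h₂⟩ := defect_le_neg_log_integral hφ hφ0 (le_of_lt hδ) hD
  exact ⟨hlow.trans h₁, by linarith⟩

end Defect

section Rpow

variable {α δ : ℝ}

lemma measurable_rpow_neg (α : ℝ) : Measurable fun y : ℝ ↦ y ^ (-α) :=
  measurable_id.pow_const _

lemma rpow_neg_nonneg_of_mem_Ioi (α : ℝ) : ∀ y ∈ Ioi (0 : ℝ), 0 ≤ y ^ (-α) :=
  fun _ hy ↦ rpow_nonneg (le_of_lt hy) _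

lemma exp_neg_one_div_two_mul_le_defect_rpow (hα : 0 ≤ α) (hδ0 : 0 < δ) (hδ1 : δ ≤ 1) :
    exp (-1) / 2 * δ ≤ defect (· ^ (-α)) δ := by
  have h := setIntegral_le_defect (measurable_rpow_neg α) (rpow_neg_nonneg_of_mem_Ioi α) hδ0.le
    subset_rfl measurableSet_Ioc (integrableOn_const (C := exp (-1) / 2 * δ)
      measure_Ioc_lt_top.ne) fun y hy ↦ by
      have hy : 1 ≤ y ^ (-α) := one_le_rpow_of_pos_of_le_one_of_nonpos hy.1 hy.2 (by linarith)
      gcongr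
      exact le_min (by nlinarith) hδ1
  simpa using h

lemma defect_rpow_le_of_one_lt (hα : 1 < α) (hδ : 0 < δ) :
    defect (· ^ (-α)) δ ≤ α / (α - 1) * δ ^ (1 / α) := by
  set a := δ ^ (1 / α)
  have ha : 0 < a := rpow_pos_of_pos hδ _
  have hδa : δ * a ^ (-α + 1) = a := by
    have haα : a ^ α = δ := by
      rw [← rpow_mul hδ.le, one_div_mul_cancel (by linarith), rpow_one]
    rw [rpow_add ha, rpow_neg ha.le, haα, rpow_one]
    field_simp
  have hfar : ∫ y in Ioi a, defectDensity (· ^ (-α)) δ y ≤ a / (α - 1) := by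
    calc _ ≤ δ * ∫ y in Ioi a, y ^ (-α) :=
          setIntegral_defectDensity_le_mul (measurable_rpow_neg α)
            (rpow_neg_nonneg_of_mem_Ioi α) hδ.le (Ioi_subset_Ioi ha.le) measurableSet_Ioi
            (integrableOn_Ioi_rpow_of_lt (by linarith) ha)
      _ = a / (α - 1) := by
        rw [integral_Ioi_rpow_of_lt (by linarith) ha, mul_div_assoc', mul_neg, hδa,
          ← neg_div_neg_eq, neg_neg, neg_add, neg_neg, ← sub_eq_add_neg]
  have hint := integrableOn_defectDensity (measurable_rpow_neg α)
    (rpow_neg_nonneg_of_mem_Ioi α) hδ.le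
  rw [defect, ← intervalIntegral.integral_interval_add_Ioi hint
    (hint.mono_set (Ioi_subset_Ioi ha.le)), intervalIntegral.integral_of_le ha.le]
  have : α - 1 ≠ 0 := by linarith
  calc _ ≤ a + a / (α - 1) := add_le_add (setIntegral_Ioc_zero_defectDensity_le
        (measurable_rpow_neg α) (rpow_neg_nonneg_of_mem_Ioi α) hδ.le ha.le) hfar
    _ = α / (α - 1) * a := by field_simp; ring

lemma exp_neg_one_div_two_mul_rpow_le_defect_rpow (hα : 0 < α) (hδ0 : 0 < δ) (hδ1 : δ ≤ 1) :
    exp (-1) / 2 * δ ^ (1 / α) ≤ defect (· ^ (-α)) δ := by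
  set a := δ ^ (1 / α)
  have ha : 0 < a := rpow_pos_of_pos hδ0 _
  have ha1 : a ≤ 1 := rpow_le_one hδ0.le hδ1 (by positivity)
  have hδa : δ * a ^ (-α) = 1 := by
    rw [← rpow_mul hδ0.le, one_div_mul_eq_div, neg_div, div_self hα.ne', rpow_neg_one,
      mul_inv_cancel₀ hδ0.ne']
  have h := setIntegral_le_defect (measurable_rpow_neg α) (rpow_neg_nonneg_of_mem_Ioi α) hδ0.le
    (Ioc_subset_Ioc_right ha1) measurableSet_Ioc
    (integrableOn_const (C := exp (-1) / 2) measure_Ioc_lt_top.ne) fun y hy ↦ by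
      have : a ^ (-α) ≤ y ^ (-α) := rpow_le_rpow_of_nonpos hy.1 hy.2 (by linarith)
      have : 1 ≤ δ * y ^ (-α) := hδa ▸ mul_le_mul_of_nonneg_left this hδ0.le
      simp [this]
  simpa [ha.le, mul_comm] using h

lemma defect_rpow_le_Gamma_mul (hα : α < 1) (hδ : 0 ≤ δ) :
    defect (· ^ (-α)) δ ≤ Gamma (1 - α) * δ := by
  have hGamma := Gamma_eq_integral (sub_pos.mpr hα)
  rw [sub_sub_cancel_left] at hGamma
  have hint : IntegrableOn (fun y ↦ exp (-y) * y ^ (-α)) (Ioi 0) := by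
    simpa using GammaIntegral_convergent (sub_pos.mpr hα)
  have h := setIntegral_defectDensity_le (measurable_rpow_neg α)
    (rpow_neg_nonneg_of_mem_Ioi α) hδ subset_rfl measurableSet_Ioi (hint.const_mul δ) fun y _ ↦ by
      rw [mul_left_comm]
      exact mul_le_mul_of_nonneg_left (min_le_left _ _) (exp_nonneg _)
  rwa [integral_const_mul, ← hGamma, mul_comm] at h

end Rpow

section Inv

variable {δ : ℝ}

lemma inv_nonneg_of_mem_Ioi : ∀ y ∈ Ioi (0 : ℝ), 0 ≤ y⁻¹ := fun _ hy ↦ inv_nonneg.mpr (le_of_lt hy)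

lemma integrableOn_Ioc_inv (hδ0 : 0 < δ) (hδ1 : δ ≤ 1) : IntegrableOn (fun y ↦ y⁻¹) (Ioc δ 1) :=
  (intervalIntegrable_iff_integrableOn_Ioc_of_le hδ1).mp <| intervalIntegrable_inv_iff.mpr <|
    Or.inr fun h ↦ by linarith [(uIcc_of_le hδ1 ▸ h).1]

lemma integral_Ioc_inv (hδ0 : 0 < δ) (hδ1 : δ ≤ 1) : ∫ y in Ioc δ 1, y⁻¹ = log (1 / δ) := by
  rw [← intervalIntegral.integral_of_le hδ1, integral_inv_of_pos hδ0 one_pos]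

lemma exp_neg_one_div_two_mul_le_defect_inv (hδ0 : 0 < δ) (hδ1 : δ ≤ 1) :
    exp (-1) / 2 * (δ * log (1 / δ)) ≤ defect (·⁻¹) δ := by
  have h := setIntegral_le_defect measurable_inv inv_nonneg_of_mem_Ioi hδ0.le
    (Ioc_subset_Ioc_left hδ0.le) measurableSet_Ioc
    ((integrableOn_Ioc_inv hδ0 hδ1).const_mul (exp (-1) / 2 * δ)) fun y hy ↦ by
      have hy0 : 0 < y := hδ0.trans hy.1
      have : δ * y⁻¹ ≤ 1 := by rw [← div_eq_mul_inv, div_le_one hy0]; exact hy.1.le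
      rw [min_eq_left this, mul_assoc]
  rwa [integral_const_mul, integral_Ioc_inv hδ0 hδ1, mul_assoc] at h

lemma defect_inv_le (hδ0 : 0 < δ) (hδ1 : δ ≤ exp (-1)) :
    defect (·⁻¹) δ ≤ 3 * (δ * log (1 / δ)) := by
  have hδ1' : δ ≤ 1 := hδ1.trans (exp_le_one_iff.mpr (by norm_num))
  have hlog : 1 ≤ log (1 / δ) := by
    rw [le_log_iff_exp_le (by positivity), le_div_iff₀ hδ0, ← le_div_iff₀' (exp_pos 1),
      one_div, ← exp_neg]
    exact hδ1
  have hint := integrableOn_defectDensity measurable_inv inv_nonneg_of_mem_Ioi hδ0.le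
  have hmid : ∫ y in Ioc δ 1, defectDensity (·⁻¹) δ y ≤ δ * log (1 / δ) := by
    rw [← integral_Ioc_inv hδ0 hδ1']
    exact setIntegral_defectDensity_le_mul measurable_inv inv_nonneg_of_mem_Ioi hδ0.le
      (Ioc_subset_Ioi_self.trans (Ioi_subset_Ioi hδ0.le)) measurableSet_Ioc
      (integrableOn_Ioc_inv hδ0 hδ1')
  have hfar : ∫ y in Ioi 1, defectDensity (·⁻¹) δ y ≤ δ := by
    have h := setIntegral_defectDensity_le measurable_inv inv_nonneg_of_mem_Ioi
      hδ0.le (Ioi_subset_Ioi zero_le_one) measurableSet_Ioi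
      ((integrableOn_exp_neg_Ioi 1).const_mul δ) fun y hy ↦ by
        have : δ * y⁻¹ ≤ δ := mul_le_of_le_one_right hδ0.le (inv_le_one_of_one_le₀ hy.le)
        rw [mul_comm δ (exp _)]
        exact mul_le_mul_of_nonneg_left ((min_le_left _ _).trans this) (exp_nonneg _)
    rw [integral_const_mul, integral_exp_neg_Ioi] at h
    exact h.trans (mul_le_of_le_one_right hδ0.le (exp_le_one_iff.mpr (by norm_num)))
  rw [defect, ← intervalIntegral.integral_interval_add_Ioi hint
      (hint.mono_set (Ioi_subset_Ioi hδ0.le)), ← intervalIntegral.integral_interval_add_Ioi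
      (hint.mono_set (Ioi_subset_Ioi hδ0.le)) (hint.mono_set (Ioi_subset_Ioi zero_le_one)),
    intervalIntegral.integral_of_le hδ0.le, intervalIntegral.integral_of_le hδ1']
  nlinarith [setIntegral_Ioc_zero_defectDensity_le measurable_inv inv_nonneg_of_mem_Ioi hδ0.le
    hδ0.le]

end Inv

theorem neg_log_integral_bounds_of_one_lt {α : ℝ} (hα : 1 < α) :
    ∃ k₁ k₂ : ℝ, 0 < k₁ ∧ k₁ ≤ k₂ ∧ ∀ᶠ δ in 𝓝[>] 0,
      k₁ * δ ^ (1 / α) ≤ -log (∫ y in Ioi 0, exp (-y - δ * y ^ (-α))) ∧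
        -log (∫ y in Ioi 0, exp (-y - δ * y ^ (-α))) ≤ k₂ * δ ^ (1 / α) := by
  have hα0 : 0 < α := by linarith
  refine exists_neg_log_integral_bounds (measurable_rpow_neg α) (rpow_neg_nonneg_of_mem_Ioi α) ?_
    (c := exp (-1) / 2) (C := α / (α - 1)) (by positivity) ?_
  · have h := (continuousAt_rpow_const 0 (1 / α) (Or.inr (by positivity))).tendsto.mono_left
      (nhdsWithin_le_nhds (s := Ioi 0))
    rwa [zero_rpow (one_div_pos.mpr hα0).ne'] at h
  · filter_upwards [Ioo_mem_nhdsGT one_pos] with δ ⟨hδ0, hδ1⟩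
    exact ⟨rpow_pos_of_pos hδ0 _, exp_neg_one_div_two_mul_rpow_le_defect_rpow hα0 hδ0 hδ1.le,
      defect_rpow_le_of_one_lt hα hδ0⟩

theorem neg_log_integral_bounds_of_lt_one {α : ℝ} (hα0 : 0 < α) (hα : α < 1) :
    ∃ k₁ k₂ : ℝ, 0 < k₁ ∧ k₁ ≤ k₂ ∧ ∀ᶠ δ in 𝓝[>] 0,
      k₁ * δ ≤ -log (∫ y in Ioi 0, exp (-y - δ * y ^ (-α))) ∧
        -log (∫ y in Ioi 0, exp (-y - δ * y ^ (-α))) ≤ k₂ * δ := by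
  refine exists_neg_log_integral_bounds (measurable_rpow_neg α) (rpow_neg_nonneg_of_mem_Ioi α)
    (tendsto_id.mono_left nhdsWithin_le_nhds) (c := exp (-1) / 2) (C := Gamma (1 - α))
    (by positivity) ?_
  filter_upwards [Ioo_mem_nhdsGT one_pos] with δ ⟨hδ0, hδ1⟩
  exact ⟨hδ0, exp_neg_one_div_two_mul_le_defect_rpow hα0.le hδ0 hδ1.le,
    defect_rpow_le_Gamma_mul hα hδ0.le⟩

theorem neg_log_integral_bounds_inv :
    ∃ k₁ k₂ : ℝ, 0 < k₁ ∧ k₁ ≤ k₂ ∧ ∀ᶠ δ in 𝓝[>] 0,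
      k₁ * (δ * log (1 / δ)) ≤ -log (∫ y in Ioi 0, exp (-y - δ / y)) ∧
        -log (∫ y in Ioi 0, exp (-y - δ / y)) ≤ k₂ * (δ * log (1 / δ)) := by
  simp only [div_eq_mul_inv _ (_ : ℝ)]
  refine exists_neg_log_integral_bounds measurable_inv inv_nonneg_of_mem_Ioi ?_
    (c := exp (-1) / 2) (C := 3) (by positivity) ?_
  · have h := (continuous_negMulLog.tendsto 0).mono_left (nhdsWithin_le_nhds (s := Ioi 0))
    rw [negMulLog_zero] at h
    refine h.congr fun δ ↦ ?_
    rw [negMulLog, one_mul, log_inv]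
    ring
  · filter_upwards [Ioo_mem_nhdsGT (exp_pos (-1))] with δ ⟨hδ0, hδ1⟩
    have hδ1' : δ < 1 := hδ1.trans (exp_lt_one_iff.mpr (by norm_num))
    refine ⟨?_, by simpa using exp_neg_one_div_two_mul_le_defect_inv hδ0 hδ1'.le,
      by simpa using defect_inv_le hδ0 hδ1.le⟩
    rw [one_mul, log_inv]
    exact mul_pos hδ0 (neg_pos.mpr (log_neg hδ0 hδ1'))

/-- For every `α > 0` there exist `0 < k₁ ≤ k₂ < ∞` such that for all sufficiently
small `δ > 0`: if `α > 1` then `k₁·δ^(1/α) ≤ -log ∫_0^∞ e^(-y-δ y^(-α)) dy ≤ k₂·δ^(1/α)`;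
if `α = 1` then the bounds are `k₁·δ·log(1/δ)` and `k₂·δ·log(1/δ)`;
if `α < 1` then the bounds are `k₁·δ` and `k₂·δ`. -/
theorem stmt12 (α : ℝ) (hα : 0 < α) :
    ∃ k₁ k₂ : ℝ, 0 < k₁ ∧ k₁ ≤ k₂ ∧
      ∀ᶠ δ in nhdsWithin (0 : ℝ) (Set.Ioi 0),
        (1 < α →
          k₁ * δ ^ (1 / α) ≤
            -Real.log (∫ y in Set.Ioi (0 : ℝ), Real.exp (-y - δ * y ^ (-α))) ∧
          -Real.log (∫ y in Set.Ioi (0 : ℝ), Real.exp (-y - δ * y ^ (-α))) ≤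
            k₂ * δ ^ (1 / α)) ∧
        (α = 1 →
          k₁ * (δ * Real.log (1 / δ)) ≤
            -Real.log (∫ y in Set.Ioi (0 : ℝ), Real.exp (-y - δ / y)) ∧
          -Real.log (∫ y in Set.Ioi (0 : ℝ), Real.exp (-y - δ / y)) ≤
            k₂ * (δ * Real.log (1 / δ))) ∧
        (α < 1 →
          k₁ * δ ≤
            -Real.log (∫ y in Set.Ioi (0 : ℝ), Real.exp (-y - δ * y ^ (-α))) ∧
          -Real.log (∫ y in Set.Ioi (0 : ℝ), Real.exp (-y - δ * y ^ (-α))) ≤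
            k₂ * δ) := by
  rcases lt_trichotomy α 1 with h | rfl | h
  · obtain ⟨k₁, k₂, hk₁, hk, hev⟩ := neg_log_integral_bounds_of_lt_one hα h
    exact ⟨k₁, k₂, hk₁, hk, hev.mono fun δ hδ ↦
      ⟨fun h' ↦ absurd h' h.not_gt, fun h' ↦ absurd h' h.ne, fun _ ↦ hδ⟩⟩
  · obtain ⟨k₁, k₂, hk₁, hk, hev⟩ := neg_log_integral_bounds_inv
    exact ⟨k₁, k₂, hk₁, hk, hev.mono fun δ hδ ↦
      ⟨fun h' ↦ absurd h' (lt_irrefl 1), fun _ ↦ hδ, fun h' ↦ absurd h' (lt_irrefl 1)⟩⟩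
  · obtain ⟨k₁, k₂, hk₁, hk, hev⟩ := neg_log_integral_bounds_of_one_lt h
    exact ⟨k₁, k₂, hk₁, hk, hev.mono fun δ hδ ↦
      ⟨fun _ ↦ hδ, fun h' ↦ absurd h' h.ne', fun h' ↦ absurd h' h.not_gt⟩⟩
end

section
/- Let V be a positive random variable and τ > 0, θ ∈ ℝ. Then log E[e^{−λV}] ≍ −λ·(log λ)^{−τ}·(log log λ)^{θ} as λ → ∞ holds if and only if log|log P(V ≤ ε)| ≍ ε^{−1/τ}·|log ε|^{θ/τ} as ε → 0⁺, where ≍ means bounded above and below by positive constant multiples. -/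
/-!
Write `L(λ) = E e^{-λV}` and `F(ε) = P(V ≤ ε)`. The elementary bounds
`e^{-λε} F(ε) ≤ L(λ) ≤ F(ε) + e^{-λε}` give, for every pair `(λ, ε)`,
`-log L(λ) ≤ λε - log F(ε)` and `-log L(λ) ≥ min (-log F(ε), λε) - log 2`.
The scales `g(λ) = (log λ)^{-τ} (log log λ)^θ` and `ψ(ε) = ε^{-1/τ} |log ε|^{θ/τ}` are
inverse to each other up to constants: `ψ(K g(λ)) ~ K^{-1/τ} τ^{θ/τ} log λ` and
`g(exp (A ψ(ε))) ~ A^{-τ} τ^{-θ} ε`. Coupling `ε = K g(λ)`, resp. `λ = exp (A ψ(ε))`, with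
`K`, `A` tuned to the given constants makes one of the two terms dominate the other, and each
bound transfers from one side to the other.
-/

open MeasureTheory Filter Real Topology

noncomputable def laplaceRate (τ θ l : ℝ) : ℝ := log l ^ (-τ) * log (log l) ^ θ

noncomputable def smallBallRate (τ θ ε : ℝ) : ℝ := ε ^ (-1 / τ) * |log ε| ^ (θ / τ)

theorem tendsto_nhdsGT_zero_of_tendsto_comp_exp_neg {α : Type*} {f : ℝ → α} {l : Filter α}
    (h : Tendsto (fun u => f (exp (-u))) atTop l) : Tendsto f (𝓝[>] 0) l :=
  tendsto_comp_exp_atBot.1 <| by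
    simpa [Function.comp_def] using h.comp tendsto_neg_atBot_atTop

theorem tendsto_exp_mul_mul_rpow_atTop {a : ℝ} (ha : 0 < a) (q : ℝ) :
    Tendsto (fun u => exp (a * u) * u ^ q) atTop atTop := by
  refine tendsto_atTop_mono' _ ?_ (tendsto_exp_mul_div_rpow_atTop |q| a ha)
  filter_upwards [eventually_ge_atTop 1] with u hu
  rw [div_eq_mul_inv, ← rpow_neg (by linarith)]
  gcongr
  exact neg_abs_le q

theorem tendsto_add_mul_add_mul_log_div_atTop (a b d : ℝ) :
    Tendsto (fun s => (a + b * s + d * log s) / s) atTop (𝓝 b) := by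
  have h : Tendsto (fun s => a / s + b + d * (log s / s)) atTop (𝓝 (0 + b + d * 0)) :=
    ((tendsto_const_nhds.div_atTop tendsto_id).add tendsto_const_nhds).add
      (isLittleO_log_id_atTop.tendsto_div_nhds_zero.const_mul d)
  rw [zero_add, mul_zero, add_zero] at h
  refine h.congr' ?_
  filter_upwards [eventually_gt_atTop 0] with s hs
  field_simp

theorem exists_pos_rpow_eq {p M : ℝ} (hp : p ≠ 0) (hM : 0 < M) : ∃ K, 0 < K ∧ K ^ p = M :=
  ⟨M ^ p⁻¹, by positivity, rpow_inv_rpow hM.le hp⟩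

section Rates

variable (τ θ : ℝ)

theorem laplaceRate_exp (s : ℝ) : laplaceRate τ θ (exp s) = s ^ (-τ) * log s ^ θ := by
  simp only [laplaceRate, log_exp]

theorem smallBallRate_exp_neg {u : ℝ} (hu : 0 ≤ u) :
    smallBallRate τ θ (exp (-u)) = exp (u / τ) * u ^ (θ / τ) := by
  rw [smallBallRate, log_exp, abs_neg, abs_of_nonneg hu, ← exp_mul]
  ring_nf

theorem tendsto_rpow_half_mul_laplaceRate_atTop :
    Tendsto (fun l => l ^ (1 / 2 : ℝ) * laplaceRate τ θ l) atTop atTop := by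
  refine tendsto_comp_exp_atTop.1 ?_
  refine tendsto_atTop_mono' _ ?_ (tendsto_exp_mul_mul_rpow_atTop one_half_pos (-(τ + |θ|)))
  filter_upwards [eventually_ge_atTop (exp 1)] with t ht
  have ht0 : 0 < t := lt_of_lt_of_le (exp_pos 1) ht
  have hlog1 : 1 ≤ log t := by rwa [le_log_iff_exp_le ht0]
  have hlog_le : log t ≤ t := (log_le_sub_one_of_pos ht0).trans (by linarith)
  have hlog_pow : t ^ (-|θ|) ≤ log t ^ θ :=
    calc t ^ (-|θ|) ≤ log t ^ (-|θ|) :=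
          rpow_le_rpow_of_nonpos (by linarith) hlog_le (neg_nonpos.2 (abs_nonneg θ))
      _ ≤ log t ^ θ := rpow_le_rpow_of_exponent_le hlog1 (neg_abs_le θ)
  rw [laplaceRate_exp, ← exp_mul, neg_add, rpow_add ht0, mul_comm (t : ℝ) (1 / 2)]
  gcongr

theorem tendsto_mul_laplaceRate_atTop : Tendsto (fun l => l * laplaceRate τ θ l) atTop atTop := by
  refine ((tendsto_rpow_atTop one_half_pos).atTop_mul_atTop₀
    (tendsto_rpow_half_mul_laplaceRate_atTop τ θ)).congr' ?_
  filter_upwards [eventually_ge_atTop 0] with l hl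
  rw [← mul_assoc, ← rpow_add' hl (by norm_num)]
  norm_num

variable {τ} (hτ : 0 < τ)
include hτ

theorem tendsto_const_mul_laplaceRate_nhdsGT_zero {K : ℝ} (hK : 0 < K) :
    Tendsto (fun l => K * laplaceRate τ θ l) atTop (𝓝[>] 0) := by
  refine tendsto_comp_exp_atTop.1 (tendsto_nhdsWithin_iff.2 ⟨?_, ?_⟩)
  · simp only [laplaceRate_exp]
    rw [← mul_zero K]
    refine ((isLittleO_log_rpow_rpow_atTop θ hτ).tendsto_div_nhds_zero.const_mul K).congr' ?_
    filter_upwards [eventually_gt_atTop 0] with s hs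
    rw [div_eq_mul_inv, ← rpow_neg hs.le, mul_comm (log s ^ θ)]
  · filter_upwards [eventually_gt_atTop (exp 1)] with s hs
    have hs1 : 1 < log s := by rwa [lt_log_iff_exp_lt (lt_trans (exp_pos 1) hs)]
    rw [laplaceRate_exp]
    exact mul_pos hK (mul_pos (rpow_pos_of_pos (by linarith [add_one_le_exp 1]) _)
      (rpow_pos_of_pos (by linarith) _))

theorem tendsto_smallBallRate_mul_laplaceRate_div_log {K : ℝ} (hK : 0 < K) :
    Tendsto (fun l => smallBallRate τ θ (K * laplaceRate τ θ l) / log l) atTop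
      (𝓝 (K ^ (-1 / τ) * τ ^ (θ / τ))) := by
  -- substitute `l = exp (exp s)`, so that `log l = exp s` and `log (log l) = s`
  refine tendsto_comp_exp_atTop.1 (tendsto_comp_exp_atTop.1 ?_)
  have hlim : Tendsto (fun s => K ^ (-1 / τ) * |(log K + (-τ) * s + θ * log s) / s| ^ (θ / τ))
      atTop (𝓝 (K ^ (-1 / τ) * τ ^ (θ / τ))) := by
    have h := (tendsto_add_mul_add_mul_log_div_atTop (log K) (-τ) θ).abs
    rw [abs_neg, abs_of_pos hτ] at h
    exact (h.rpow_const (Or.inl hτ.ne')).const_mul _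
  refine hlim.congr' ?_
  filter_upwards [eventually_gt_atTop 0] with s hs
  have hpow : 0 < exp s ^ (-τ) * s ^ θ := by positivity
  have hlog : log (K * (exp s ^ (-τ) * s ^ θ)) = log K + (-τ) * s + θ * log s := by
    rw [log_mul hK.ne' hpow.ne', log_mul (by positivity) (by positivity), log_rpow (exp_pos s),
      log_rpow hs, log_exp]
    ring
  have hrpow :
      (K * (exp s ^ (-τ) * s ^ θ)) ^ (-1 / τ) = K ^ (-1 / τ) * (exp s * s ^ (-(θ / τ))) := by
    have h1 : -τ * (-1 / τ) = 1 := by field_simp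
    have h2 : θ * (-1 / τ) = -(θ / τ) := by ring
    rw [mul_rpow hK.le hpow.le, mul_rpow (by positivity) (by positivity),
      ← rpow_mul (exp_pos s).le, ← rpow_mul hs.le, h1, h2, rpow_one]
  simp only [laplaceRate_exp, log_exp, smallBallRate, hlog, hrpow, abs_div, abs_of_pos hs,
    div_rpow (abs_nonneg _) hs.le, rpow_neg hs.le]
  field_simp

theorem exists_tendsto_smallBallRate_mul_laplaceRate_div_log {M : ℝ} (hM : 0 < M) :
    ∃ K, 0 < K ∧
      Tendsto (fun l => smallBallRate τ θ (K * laplaceRate τ θ l) / log l) atTop (𝓝 M) := by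
  obtain ⟨K, hK, hKM⟩ := exists_pos_rpow_eq (p := -1 / τ) (by simp [hτ.ne'])
    (div_pos hM (rpow_pos_of_pos hτ (θ / τ)))
  refine ⟨K, hK, ?_⟩
  simpa [hKM, div_mul_cancel₀ _ (rpow_pos_of_pos hτ (θ / τ)).ne'] using
    tendsto_smallBallRate_mul_laplaceRate_div_log θ hτ hK

theorem tendsto_laplaceRate_exp_mul_smallBallRate_div {A : ℝ} (hA : 0 < A) :
    Tendsto (fun ε => laplaceRate τ θ (exp (A * smallBallRate τ θ ε)) / ε) (𝓝[>] 0)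
      (𝓝 (A ^ (-τ) * τ ^ (-θ))) := by
  refine tendsto_nhdsGT_zero_of_tendsto_comp_exp_neg ?_
  have hlin := tendsto_add_mul_add_mul_log_div_atTop (log A) (1 / τ) (θ / τ)
  have hlim : Tendsto (fun u => A ^ (-τ) * ((log A + 1 / τ * u + θ / τ * log u) / u) ^ θ) atTop
      (𝓝 (A ^ (-τ) * τ ^ (-θ))) := by
    have h := (hlin.rpow_const (p := θ) (Or.inl (by positivity))).const_mul (A ^ (-τ))
    rwa [one_div τ, inv_rpow hτ.le, ← rpow_neg hτ.le, ← one_div] at h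
  refine hlim.congr' ?_
  filter_upwards [hlin.eventually_const_lt (by positivity : (0 : ℝ) < 1 / τ),
    eventually_gt_atTop 0] with u hlin_pos hu
  have hlog_pos : 0 < log A + 1 / τ * u + θ / τ * log u := by
    simpa [hu.ne'] using mul_pos hlin_pos hu
  have hψ : 0 < exp (u / τ) * u ^ (θ / τ) := by positivity
  have hlog : log (A * (exp (u / τ) * u ^ (θ / τ))) = log A + 1 / τ * u + θ / τ * log u := by
    rw [log_mul hA.ne' hψ.ne', log_mul (by positivity) (by positivity), log_exp, log_rpow hu]
    ring
  have hrpow :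
      (A * (exp (u / τ) * u ^ (θ / τ))) ^ (-τ) = A ^ (-τ) * (exp (-u) * u ^ (-θ)) := by
    rw [mul_rpow hA.le hψ.le, mul_rpow (by positivity) (by positivity), ← exp_mul,
      ← rpow_mul hu.le]
    field_simp
  simp only [smallBallRate_exp_neg τ θ hu.le, laplaceRate_exp, hlog, hrpow,
    div_rpow hlog_pos.le hu.le, rpow_neg hu.le]
  field_simp

theorem exists_tendsto_laplaceRate_exp_mul_smallBallRate_div {M : ℝ} (hM : 0 < M) :
    ∃ A, 0 < A ∧ Tendsto (fun ε => laplaceRate τ θ (exp (A * smallBallRate τ θ ε)) / ε)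
      (𝓝[>] 0) (𝓝 M) := by
  obtain ⟨A, hA, hAM⟩ := exists_pos_rpow_eq (p := -τ) (neg_ne_zero.2 hτ.ne')
    (div_pos hM (rpow_pos_of_pos hτ (-θ)))
  refine ⟨A, hA, ?_⟩
  simpa [hAM, div_mul_cancel₀ _ (rpow_pos_of_pos hτ (-θ)).ne'] using
    tendsto_laplaceRate_exp_mul_smallBallRate_div θ hτ hA

theorem tendsto_smallBallRate_div_neg_log :
    Tendsto (fun ε => smallBallRate τ θ ε / -log ε) (𝓝[>] 0) atTop := by
  refine tendsto_nhdsGT_zero_of_tendsto_comp_exp_neg ?_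
  refine (tendsto_exp_mul_mul_rpow_atTop (inv_pos.2 hτ) (θ / τ - 1)).congr' ?_
  filter_upwards [eventually_gt_atTop 0] with u hu
  rw [smallBallRate_exp_neg τ θ hu.le, log_exp, neg_neg, rpow_sub_one hu.ne']
  field_simp

theorem tendsto_mul_smallBallRate_add_log {A : ℝ} (hA : 0 < A) :
    Tendsto (fun ε => A * smallBallRate τ θ ε + log ε) (𝓝[>] 0) atTop := by
  have h := tendsto_neg_atBot_atTop.comp tendsto_log_nhdsGT_zero
  refine (h.atTop_mul_atTop₀ (tendsto_atTop_add_const_right _ (-1)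
    ((tendsto_smallBallRate_div_neg_log θ hτ).const_mul_atTop hA))).congr' ?_
  filter_upwards [h.eventually_gt_atTop 0] with ε hε
  simp only [Function.comp_apply] at hε ⊢
  have hlog : log ε ≠ 0 := by linarith
  field_simp
  ring

theorem tendsto_smallBallRate : Tendsto (smallBallRate τ θ) (𝓝[>] 0) atTop := by
  refine tendsto_atTop_mono' _ ?_ (tendsto_mul_smallBallRate_add_log θ hτ one_pos)
  filter_upwards [Ioo_mem_nhdsGT one_pos] with ε hε
  linarith [log_neg hε.1 hε.2]

end Rates

section Laplace

variable {Ω : Type*} [MeasurableSpace Ω] (P : Measure Ω) (V : Ω → ℝ)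

noncomputable def negLogLaplace (l : ℝ) : ℝ := -log (∫ ω, exp (-(l * V ω)) ∂P)

noncomputable def negLogCdf (ε : ℝ) : ℝ := -log (P {ω | V ω ≤ ε}).toReal

theorem negLogCdf_nonneg [IsProbabilityMeasure P] (ε : ℝ) : 0 ≤ negLogCdf P V ε :=
  neg_nonneg.2 (log_nonpos ENNReal.toReal_nonneg measureReal_le_one)

variable {P V}

theorem cdf_pos_of_log_negLogCdf_pos {ε : ℝ} (h : 0 < log (negLogCdf P V ε)) :
    0 < (P {ω | V ω ≤ ε}).toReal := by
  refine ENNReal.toReal_nonneg.lt_of_ne fun hF => ?_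
  simp [negLogCdf, ← hF] at h

variable (P) [IsProbabilityMeasure P] (hV : Measurable V) (hV0 : ∀ ω, 0 ≤ V ω)
include hV hV0

theorem integrable_exp_neg_mul_s13 {l : ℝ} (hl : 0 ≤ l) :
    Integrable (fun ω => exp (-(l * V ω))) P := by
  refine Integrable.mono' (integrable_const 1) (hV.const_mul l).neg.exp.aestronglyMeasurable ?_
  filter_upwards with ω
  rw [norm_of_nonneg (exp_pos _).le, exp_le_one_iff, neg_nonpos]
  exact mul_nonneg hl (hV0 ω)

theorem exp_neg_mul_mul_cdf_le_integral {l : ℝ} (hl : 0 ≤ l) (ε : ℝ) :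
    exp (-(l * ε)) * (P {ω | V ω ≤ ε}).toReal ≤ ∫ ω, exp (-(l * V ω)) ∂P := by
  have hs : MeasurableSet {ω | V ω ≤ ε} := hV measurableSet_Iic
  calc exp (-(l * ε)) * (P {ω | V ω ≤ ε}).toReal
      = ∫ ω, {ω | V ω ≤ ε}.indicator (fun _ => exp (-(l * ε))) ω ∂P := by
        rw [integral_indicator_const _ hs, smul_eq_mul, mul_comm, measureReal_def]
    _ ≤ ∫ ω, exp (-(l * V ω)) ∂P := by
        refine integral_mono ((integrable_const _).indicator hs)
          (integrable_exp_neg_mul_s13 P hV hV0 hl) fun ω => ?_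
        by_cases hω : ω ∈ {ω | V ω ≤ ε}
        · rw [Set.indicator_of_mem hω]
          exact exp_le_exp.2 (neg_le_neg (mul_le_mul_of_nonneg_left hω hl))
        · rw [Set.indicator_of_notMem hω]
          exact (exp_pos _).le

theorem integral_exp_neg_mul_le_cdf_add {l : ℝ} (hl : 0 ≤ l) (ε : ℝ) :
    ∫ ω, exp (-(l * V ω)) ∂P ≤ (P {ω | V ω ≤ ε}).toReal + exp (-(l * ε)) := by
  have hs : MeasurableSet {ω | V ω ≤ ε} := hV measurableSet_Iic
  calc ∫ ω, exp (-(l * V ω)) ∂P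
      ≤ ∫ ω, ({ω | V ω ≤ ε}.indicator 1 ω + exp (-(l * ε))) ∂P := by
        refine integral_mono (integrable_exp_neg_mul_s13 P hV hV0 hl)
          (((integrable_const 1).indicator hs).add (integrable_const _)) fun ω => ?_
        by_cases hω : ω ∈ {ω | V ω ≤ ε}
        · have : exp (-(l * V ω)) ≤ 1 :=
            exp_le_one_iff.2 (neg_nonpos.2 (mul_nonneg hl (hV0 ω)))
          rw [Set.indicator_of_mem hω, Pi.one_apply]
          linarith [exp_pos (-(l * ε))]
        · have : exp (-(l * V ω)) ≤ exp (-(l * ε)) :=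
            exp_le_exp.2 (neg_le_neg (mul_le_mul_of_nonneg_left (not_le.1 hω).le hl))
          rw [Set.indicator_of_notMem hω]
          linarith
    _ = (P {ω | V ω ≤ ε}).toReal + exp (-(l * ε)) := by
        rw [integral_add ((integrable_const 1).indicator hs) (integrable_const _),
          integral_indicator_one hs, integral_const]
        simp [measureReal_def]

theorem negLogLaplace_le_mul_add_negLogCdf {l ε : ℝ} (hl : 0 ≤ l)
    (hF : 0 < (P {ω | V ω ≤ ε}).toReal) :
    negLogLaplace P V l ≤ l * ε + negLogCdf P V ε := by
  have h := log_le_log (by positivity) (exp_neg_mul_mul_cdf_le_integral P hV hV0 hl ε)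
  rw [log_mul (exp_pos _).ne' hF.ne', log_exp] at h
  rw [negLogLaplace, negLogCdf]
  linarith

theorem min_negLogCdf_sub_log_two_le_negLogLaplace {l : ℝ} (hl : 0 ≤ l) (ε : ℝ) :
    min (negLogCdf P V ε) (l * ε) - log 2 ≤ negLogLaplace P V l := by
  set m := min (negLogCdf P V ε) (l * ε)
  have hm : m ≤ -log (P {ω | V ω ≤ ε}).toReal := min_le_left _ _
  have hF : (P {ω | V ω ≤ ε}).toReal ≤ exp (-m) :=
    (le_exp_log _).trans (exp_le_exp.2 (by linarith))
  have hexp : exp (-(l * ε)) ≤ exp (-m) := exp_le_exp.2 (neg_le_neg (min_le_right _ _))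
  have h := log_le_log (integral_exp_pos (integrable_exp_neg_mul_s13 P hV hV0 hl))
    ((integral_exp_neg_mul_le_cdf_add P hV hV0 hl ε).trans (add_le_add hF hexp))
  rw [← two_mul, log_mul two_ne_zero (exp_pos _).ne', log_exp] at h
  rw [negLogLaplace]
  linarith

theorem mul_le_negLogLaplace_of_cdf_eq_zero {l ε : ℝ} (hl : 0 ≤ l)
    (hF : P {ω | V ω ≤ ε} = 0) : l * ε ≤ negLogLaplace P V l := by
  have hae : ∀ᵐ ω ∂P, exp (-(l * V ω)) ≤ exp (-(l * ε)) := by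
    filter_upwards [measure_eq_zero_iff_ae_notMem.1 hF] with ω hω
    exact exp_le_exp.2 (neg_le_neg (mul_le_mul_of_nonneg_left (not_le.1 hω).le hl))
  have hle : ∫ ω, exp (-(l * V ω)) ∂P ≤ exp (-(l * ε)) := by
    simpa using integral_mono_ae (integrable_exp_neg_mul_s13 P hV hV0 hl) (integrable_const _) hae
  have h := log_le_log (integral_exp_pos (integrable_exp_neg_mul_s13 P hV hV0 hl)) hle
  rw [log_exp] at h
  rw [negLogLaplace]
  linarith

end Laplace

def IsComparable {α : Type*} (f g : α → ℝ) (l : Filter α) : Prop :=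
  ∃ c C : ℝ, 0 < c ∧ c ≤ C ∧ ∀ᶠ x in l, c * g x ≤ f x ∧ f x ≤ C * g x

theorem IsComparable.of_eventually {α : Type*} {f g : α → ℝ} {l : Filter α} [l.NeBot]
    {c C : ℝ} (hc : 0 < c) (hg : ∀ᶠ x in l, 0 < g x) (hlow : ∀ᶠ x in l, c * g x ≤ f x)
    (hup : ∀ᶠ x in l, f x ≤ C * g x) : IsComparable f g l := by
  obtain ⟨x, hgx, hlx, hux⟩ := (hg.and (hlow.and hup)).exists
  exact ⟨c, C, hc, le_of_mul_le_mul_right (hlx.trans hux) hgx, hlow.and hup⟩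

section Tauberian

variable {Ω : Type*} [MeasurableSpace Ω] {P : Measure Ω} [IsProbabilityMeasure P]
  {V : Ω → ℝ} (hV : Measurable V) (hV0 : ∀ ω, 0 ≤ V ω) {τ θ : ℝ} (hτ : 0 < τ)
include hV hV0 hτ

theorem cdf_pos_of_eventually_negLogLaplace_le {C : ℝ} (hC : 0 < C)
    (h : ∀ᶠ l in atTop, negLogLaplace P V l ≤ C * (l * laplaceRate τ θ l))
    {ε : ℝ} (hε : 0 < ε) : 0 < (P {ω | V ω ≤ ε}).toReal := by
  refine ENNReal.toReal_pos (fun hF => ?_) (measure_ne_top _ _)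
  have hsmall := ((tendsto_const_mul_laplaceRate_nhdsGT_zero θ hτ hC).mono_right
    nhdsWithin_le_nhds).eventually (eventually_lt_nhds hε)
  obtain ⟨l, hl, hlε, hl0⟩ := (h.and (hsmall.and (eventually_gt_atTop 0))).exists
  have := mul_le_negLogLaplace_of_cdf_eq_zero P hV hV0 hl0.le hF
  nlinarith

theorem eventually_log_negLogCdf_le_of_negLogLaplace_le {C : ℝ} (hC : 0 < C)
    (h : ∀ᶠ l in atTop, negLogLaplace P V l ≤ C * (l * laplaceRate τ θ l)) :
    ∃ A, ∀ᶠ ε in 𝓝[>] 0, log (negLogCdf P V ε) ≤ A * smallBallRate τ θ ε := by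
  obtain ⟨A, hA, hlim⟩ :=
    exists_tendsto_laplaceRate_exp_mul_smallBallRate_div θ hτ (by positivity : 0 < 1 / (8 * C))
  have ht : Tendsto (fun ε => exp (A * smallBallRate τ θ ε)) (𝓝[>] 0) atTop :=
    tendsto_exp_atTop.comp ((tendsto_smallBallRate θ hτ).const_mul_atTop hA)
  refine ⟨A, ?_⟩
  filter_upwards [ht.eventually h,
    hlim.eventually_lt_const (by gcongr; norm_num : 1 / (8 * C) < 1 / (4 * C)),
    (tendsto_mul_smallBallRate_add_log θ hτ hA).eventually_ge_atTop 0,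
    Ioo_mem_nhdsGT one_pos] with ε hΦ hratio hy hε
  set t := exp (A * smallBallRate τ θ ε)
  set y := A * smallBallRate τ θ ε + log ε
  have hty : t * ε = exp y := by rw [exp_add, exp_log hε.1]
  have hΦt : negLogLaplace P V t < exp y / 4 := by
    have hCg : C * laplaceRate τ θ t < ε / 4 := by
      rw [div_lt_div_iff₀ hε.1 (by positivity)] at hratio
      linarith
    nlinarith [exp_pos (A * smallBallRate τ θ ε)]
  have hG : negLogCdf P V ε ≤ exp y := by
    by_contra! hlt
    have hmin := min_negLogCdf_sub_log_two_le_negLogLaplace P hV hV0 (l := t) (exp_pos _).le ε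
    rw [hty, min_eq_right hlt.le] at hmin
    linarith [add_one_le_exp y, log_two_lt_d9]
  have hlogG : log (negLogCdf P V ε) ≤ y := by
    rcases (negLogCdf_nonneg P V ε).eq_or_lt with h0 | hpos
    · rwa [← h0, log_zero]
    · exact (log_le_iff_le_exp hpos).2 hG
  linarith [log_neg hε.1 hε.2]

theorem eventually_le_log_negLogCdf_of_le_negLogLaplace {c : ℝ} (hc : 0 < c)
    (hF : ∀ᶠ ε in 𝓝[>] 0, 0 < (P {ω | V ω ≤ ε}).toReal)
    (h : ∀ᶠ l in atTop, c * (l * laplaceRate τ θ l) ≤ negLogLaplace P V l) :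
    ∃ a, 0 < a ∧
      ∀ᶠ ε in 𝓝[>] 0, a * smallBallRate τ θ ε ≤ log (negLogCdf P V ε) := by
  obtain ⟨a, ha, hlim⟩ :=
    exists_tendsto_laplaceRate_exp_mul_smallBallRate_div θ hτ (by positivity : 0 < 3 / c)
  have ht : Tendsto (fun ε => exp (a * smallBallRate τ θ ε)) (𝓝[>] 0) atTop :=
    tendsto_exp_atTop.comp ((tendsto_smallBallRate θ hτ).const_mul_atTop ha)
  refine ⟨a / 2, half_pos ha, ?_⟩
  filter_upwards [ht.eventually h, hlim.eventually_const_lt (by gcongr; norm_num : 2 / c < 3 / c),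
    (tendsto_mul_smallBallRate_add_log θ hτ (half_pos ha)).eventually_ge_atTop 0, hF,
    self_mem_nhdsWithin] with ε hΦ hratio hy hFε hε
  set t := exp (a * smallBallRate τ θ ε)
  have hct : 2 * ε < c * laplaceRate τ θ t := by
    rw [lt_div_iff₀ (Set.mem_Ioi.1 hε), div_mul_eq_mul_div, div_lt_iff₀ hc] at hratio
    linarith
  have hup := negLogLaplace_le_mul_add_negLogCdf P hV hV0 (l := t) (exp_pos _).le hFε
  have hG : exp (a * smallBallRate τ θ ε + log ε) ≤ negLogCdf P V ε := by
    rw [exp_add, exp_log hε]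
    nlinarith [exp_pos (a * smallBallRate τ θ ε)]
  have := (le_log_iff_exp_le ((exp_pos _).trans_le hG)).2 hG
  linarith

theorem eventually_negLogLaplace_le_of_log_negLogCdf_le {C : ℝ} (hC : 0 < C)
    (hF : ∀ᶠ ε in 𝓝[>] 0, 0 < (P {ω | V ω ≤ ε}).toReal)
    (h : ∀ᶠ ε in 𝓝[>] 0, log (negLogCdf P V ε) ≤ C * smallBallRate τ θ ε) :
    ∃ K, ∀ᶠ l in atTop, negLogLaplace P V l ≤ K * (l * laplaceRate τ θ l) := by
  obtain ⟨K, hK, hlim⟩ :=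
    exists_tendsto_smallBallRate_mul_laplaceRate_div_log θ hτ (by positivity : 0 < 1 / (4 * C))
  refine ⟨K + 1, ?_⟩
  filter_upwards [(tendsto_const_mul_laplaceRate_nhdsGT_zero θ hτ hK).eventually (hF.and h),
    hlim.eventually_lt_const (by gcongr; norm_num : 1 / (4 * C) < 1 / (2 * C)),
    tendsto_log_atTop.eventually_gt_atTop 0,
    (tendsto_rpow_half_mul_laplaceRate_atTop τ θ).eventually_ge_atTop 1,
    eventually_gt_atTop 0] with l ⟨hFl, hGl⟩ hratio hlog hhalf hl
  set ε := K * laplaceRate τ θ l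
  have hCψ : C * smallBallRate τ θ ε < log l / 2 := by
    rw [div_lt_iff₀ hlog, div_mul_eq_mul_div, lt_div_iff₀ (by positivity)] at hratio
    linarith
  have hG : negLogCdf P V ε ≤ l * laplaceRate τ θ l :=
    calc negLogCdf P V ε ≤ exp (log (negLogCdf P V ε)) := le_exp_log _
      _ ≤ exp (log l * (1 / 2)) := exp_le_exp.2 (by linarith)
      _ = l ^ (1 / 2 : ℝ) := (rpow_def_of_pos hl _).symm
      _ ≤ l ^ (1 / 2 : ℝ) * (l ^ (1 / 2 : ℝ) * laplaceRate τ θ l) :=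
        le_mul_of_one_le_right (by positivity) hhalf
      _ = l * laplaceRate τ θ l := by rw [← mul_assoc, ← rpow_add hl]; norm_num
  have := negLogLaplace_le_mul_add_negLogCdf P hV hV0 hl.le hFl
  linarith

theorem eventually_le_negLogLaplace_of_le_log_negLogCdf {c : ℝ} (hc : 0 < c)
    (h : ∀ᶠ ε in 𝓝[>] 0, c * smallBallRate τ θ ε ≤ log (negLogCdf P V ε)) :
    ∃ k, 0 < k ∧ ∀ᶠ l in atTop, k * (l * laplaceRate τ θ l) ≤ negLogLaplace P V l := by
  obtain ⟨k, hk, hlim⟩ :=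
    exists_tendsto_smallBallRate_mul_laplaceRate_div_log θ hτ (by positivity : 0 < 3 / c)
  have hε := tendsto_const_mul_laplaceRate_nhdsGT_zero θ hτ hk
  refine ⟨k / 2, half_pos hk, ?_⟩
  filter_upwards [hε.eventually h,
    (hε.mono_right nhdsWithin_le_nhds).eventually (eventually_le_nhds one_pos),
    hlim.eventually_const_lt (by gcongr; norm_num : 2 / c < 3 / c),
    tendsto_log_atTop.eventually_gt_atTop 0,
    (tendsto_mul_laplaceRate_atTop τ θ).eventually_ge_atTop (2 * log 2 / k),
    eventually_ge_atTop 1] with l hGl hε1 hratio hlog hlg hl1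
  set ε := k * laplaceRate τ θ l
  have h2log : 2 * log l < log (negLogCdf P V ε) := by
    rw [lt_div_iff₀ hlog, div_mul_eq_mul_div, div_lt_iff₀ hc] at hratio
    linarith
  have hGpos : 0 < negLogCdf P V ε :=
    one_pos.trans ((log_pos_iff (negLogCdf_nonneg P V ε)).1 (by linarith))
  have hG : l * ε ≤ negLogCdf P V ε :=
    calc l * ε ≤ l * l := mul_le_mul_of_nonneg_left (hε1.trans hl1) (by linarith)
      _ = exp (2 * log l) := by rw [two_mul, exp_add, exp_log (by linarith)]
      _ ≤ negLogCdf P V ε := ((lt_log_iff_exp_lt hGpos).1 h2log).le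
  have hmin := min_negLogCdf_sub_log_two_le_negLogLaplace P hV hV0 (zero_le_one.trans hl1) ε
  rw [min_eq_right hG] at hmin
  have := (div_le_iff₀ hk).1 hlg
  linarith

theorem isComparable_negLogLaplace_iff :
    IsComparable (negLogLaplace P V) (fun l => l * laplaceRate τ θ l) atTop ↔
      IsComparable (fun ε => log (negLogCdf P V ε)) (smallBallRate τ θ) (𝓝[>] 0) := by
  constructor
  · rintro ⟨c, C, hc, hcC, h⟩
    have hup := h.mono fun _ => And.right
    have hF : ∀ᶠ ε in 𝓝[>] 0, 0 < (P {ω | V ω ≤ ε}).toReal :=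
      eventually_mem_nhdsWithin.mono fun ε hε =>
        cdf_pos_of_eventually_negLogLaplace_le hV hV0 hτ (hc.trans_le hcC) hup hε
    obtain ⟨A, hA⟩ :=
      eventually_log_negLogCdf_le_of_negLogLaplace_le hV hV0 hτ (hc.trans_le hcC) hup
    obtain ⟨a, ha, ha'⟩ :=
      eventually_le_log_negLogCdf_of_le_negLogLaplace hV hV0 hτ hc hF (h.mono fun _ => And.left)
    exact .of_eventually ha ((tendsto_smallBallRate θ hτ).eventually_gt_atTop 0) ha' hA
  · rintro ⟨c, C, hc, hcC, h⟩
    have hF : ∀ᶠ ε in 𝓝[>] 0, 0 < (P {ω | V ω ≤ ε}).toReal := by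
      filter_upwards [h, (tendsto_smallBallRate θ hτ).eventually_gt_atTop 0] with ε hε hψ
      exact cdf_pos_of_log_negLogCdf_pos ((mul_pos hc hψ).trans_le hε.1)
    obtain ⟨K, hK⟩ := eventually_negLogLaplace_le_of_log_negLogCdf_le hV hV0 hτ
      (hc.trans_le hcC) hF (h.mono fun _ => And.right)
    obtain ⟨k, hk, hk'⟩ :=
      eventually_le_negLogLaplace_of_le_log_negLogCdf hV hV0 hτ hc (h.mono fun _ => And.left)
    exact .of_eventually hk ((tendsto_mul_laplaceRate_atTop τ θ).eventually_gt_atTop 0) hk' hK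

end Tauberian

/-- Tauberian equivalence: for a positive random variable `V`, `τ > 0`, `θ ∈ ℝ`,
`-log E[e^(-λV)] ≍ λ (log λ)^(-τ) (log log λ)^θ` as `λ → ∞` if and only if
`log|log P(V ≤ ε)| ≍ ε^(-1/τ) |log ε|^(θ/τ)` as `ε → 0⁺`. -/
theorem stmt13 (Ω : Type) [MeasurableSpace Ω] (P : Measure Ω) [IsProbabilityMeasure P]
    (V : Ω → ℝ) (hV : Measurable V) (hVpos : ∀ ω, 0 < V ω)
    (τ θ : ℝ) (hτ : 0 < τ) :
    (∃ c C : ℝ, 0 < c ∧ c ≤ C ∧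
      ∀ᶠ l in atTop,
        c * (l * Real.log l ^ (-τ) * Real.log (Real.log l) ^ θ) ≤
          -Real.log (∫ ω, Real.exp (-(l * V ω)) ∂P) ∧
        -Real.log (∫ ω, Real.exp (-(l * V ω)) ∂P) ≤
          C * (l * Real.log l ^ (-τ) * Real.log (Real.log l) ^ θ)) ↔
    (∃ c C : ℝ, 0 < c ∧ c ≤ C ∧
      ∀ᶠ ε in nhdsWithin (0 : ℝ) (Set.Ioi 0),
        c * (ε ^ (-1 / τ) * |Real.log ε| ^ (θ / τ)) ≤
          Real.log |Real.log ((P {ω | V ω ≤ ε}).toReal)| ∧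
        Real.log |Real.log ((P {ω | V ω ≤ ε}).toReal)| ≤
          C * (ε ^ (-1 / τ) * |Real.log ε| ^ (θ / τ))) := by
  have habs (ε : ℝ) : |log (P {ω | V ω ≤ ε}).toReal| = negLogCdf P V ε :=
    abs_of_nonpos (neg_nonneg.1 (negLogCdf_nonneg P V ε))
  simp only [habs, mul_assoc]
  exact isComparable_negLogLaplace_iff hV (fun ω => (hVpos ω).le) hτ
end
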